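/- arXiv:1604.04156 — 6 statements merged into one kernel-verified Lean document; each statement's English description precedes it below -/
import Mathlib

section
/- Let C₁ and C₂ be closed convex cones in real Banach spaces E₁ and E₂ respectively, and let L : E₁ → E₂ be a linear operator with L(C₁) ⊆ C₂. If Δ := sup{Θ_{C₂}(L v, L w) : v, w ∈ C₁} (the Θ_{C₂}-diameter of L(C₁)) is finite and strictly positive, then for all φ, ψ ∈ C₁ one has Θ_{C₂}(Lφ, Lψ) ≤ (1 − e^{−Δ}) · Θ_{C₁}(φ, ψ). -/
open Set
open scoped ENNReal

noncomputable section

/-- A (convex) cone in a real normed space: a convex subset of `E \ {0}`,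
closed under multiplication by positive scalars, with `C ∩ (-C) = ∅`, and
such that `C ∪ {0}` is a closed subset of `E`. -/
def IsClosedCone {E : Type*} [NormedAddCommGroup E] [NormedSpace ℝ E] (C : Set E) : Prop :=
  Convex ℝ C ∧ (0 : E) ∉ C ∧ (∀ t : ℝ, 0 < t → ∀ v ∈ C, t • v ∈ C) ∧
    C ∩ (-C) = ∅ ∧ IsClosed (insert (0 : E) C)

/-- The projective (Hilbert/Birkhoff) metric of a closed cone `C`, with values in `[0,+∞]`.
For `v, w ∈ C` it equals `log (B_C(v,w) / A_C(v,w))` where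
`A_C(v,w) = sup {t > 0 : w - t•v ∈ C ∪ {0}}` and `B_C(v,w) = inf {s > 0 : s•v - w ∈ C ∪ {0}}`;
it is `+∞` when `A_C = 0` (no admissible `t`) or `B_C = +∞` (no admissible `s`). -/
def coneTheta {E : Type*} [NormedAddCommGroup E] [NormedSpace ℝ E] (C : Set E) (v w : E) :
    ℝ≥0∞ :=
  ⨅ (s : ℝ) (_ : 0 < s) (_ : s • v - w ∈ insert (0 : E) C)
    (t : ℝ) (_ : 0 < t) (_ : w - t • v ∈ insert (0 : E) C),
    ENNReal.ofReal (Real.log (s / t))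

/-
Let `s, t` be admissible constants for `(φ, ψ)`, i.e. `a = sφ - ψ` and `b = ψ - tφ` lie in
`C₁ ∪ {0}`. As `Θ_{C₂}(Lb, La) ≤ Δ`, there are `τ ≤ σ` with `La - τ Lb, σ Lb - La ∈ C₂ ∪ {0}` and
`τ/σ` as close to `e^{-Δ}` as we like. Mixing these relations shows that
`s' = (s + τt)/(1 + τ)` and `t' = (s + σt)/(1 + σ)` are admissible for `(Lφ, Lψ)`, and
`log (s'/t') ≤ (1 - τ/σ) log (s/t)` because `μ ↦ (1 - τ/σ) log μ - log (μ + τ) + log (μ + σ)`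
is nondecreasing.
-/

open Real

namespace IsClosedCone

variable {E : Type*} [NormedAddCommGroup E] [NormedSpace ℝ E] {C : Set E}

theorem add_mem_insert (hC : IsClosedCone C) {x y : E}
    (hx : x ∈ insert 0 C) (hy : y ∈ insert 0 C) : x + y ∈ insert 0 C := by
  obtain ⟨hconv, -, hsmul, -, -⟩ := hC
  rcases hx with rfl | hx
  · simpa using hy
  rcases hy with rfl | hy
  · simpa using Or.inr hx
  have hmid := hconv hx hy (by norm_num : (0 : ℝ) ≤ 1 / 2) (by norm_num : (0 : ℝ) ≤ 1 / 2)
    (by norm_num)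
  refine Or.inr ?_
  convert hsmul 2 two_pos _ hmid using 1
  module

theorem smul_mem_insert (hC : IsClosedCone C) {r : ℝ} (hr : 0 < r) {x : E}
    (hx : x ∈ insert 0 C) : r • x ∈ insert 0 C := by
  rcases hx with rfl | hx
  · simp
  · exact Or.inr (hC.2.2.1 r hr x hx)

theorem le_of_sub_mem_insert (hC : IsClosedCone C) {v w : E} (hv : v ∈ C) {s t : ℝ}
    (hs : s • v - w ∈ insert 0 C) (ht : w - t • v ∈ insert 0 C) : t ≤ s := by
  by_contra! hst
  have hneg : -((s - t) • v) ∈ C := by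
    rw [← neg_smul, neg_sub]
    exact hC.2.2.1 _ (sub_pos.2 hst) v hv
  have hsum : (s - t) • v ∈ insert 0 C := by
    convert hC.add_mem_insert hs ht using 1
    module
  rcases hsum with h0 | hpos
  · exact hC.2.1 (by simpa [h0] using hneg)
  · have : (s - t) • v ∈ C ∩ -C := ⟨hpos, hneg⟩
    simp [hC.2.2.2.1] at this

end IsClosedCone

section coneTheta

variable {E : Type*} [NormedAddCommGroup E] [NormedSpace ℝ E] {C : Set E} {v w : E}

theorem coneTheta_le_ofReal_log {s t : ℝ} (hs : 0 < s) (ht : 0 < t)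
    (hsv : s • v - w ∈ insert 0 C) (htv : w - t • v ∈ insert 0 C) :
    coneTheta C v w ≤ ENNReal.ofReal (log (s / t)) :=
  iInf_le_of_le s <| iInf_le_of_le hs <| iInf_le_of_le hsv <| iInf_le_of_le t <|
    iInf_le_of_le ht <| iInf_le_of_le htv le_rfl

theorem le_coneTheta {c : ℝ≥0∞}
    (h : ∀ s t : ℝ, 0 < s → 0 < t → s • v - w ∈ insert 0 C → w - t • v ∈ insert 0 C →
      c ≤ ENNReal.ofReal (log (s / t))) :
    c ≤ coneTheta C v w := by
  simp only [coneTheta, le_iInf_iff]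
  exact fun s hs hsv t ht htv ↦ h s t hs ht hsv htv

theorem exists_log_div_lt_of_coneTheta_lt {r : ℝ} (h : coneTheta C v w < ENNReal.ofReal r) :
    ∃ s t : ℝ, 0 < s ∧ 0 < t ∧ s • v - w ∈ insert 0 C ∧ w - t • v ∈ insert 0 C ∧
      log (s / t) < r := by
  simp only [coneTheta, iInf_lt_iff, ENNReal.ofReal_lt_ofReal_iff'] at h
  obtain ⟨s, hs, hsv, t, ht, htv, hlog, -⟩ := h
  exact ⟨s, t, hs, ht, hsv, htv, hlog⟩

theorem coneTheta_smul_eq_zero {s : ℝ} (hs : 0 < s) : coneTheta C v (s • v) = 0 := by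
  refine le_antisymm ?_ zero_le
  simpa [hs.ne'] using coneTheta_le_ofReal_log (C := C) hs hs (by simp) (by simp)

end coneTheta

theorem monotoneOn_mul_log_sub_log_add_add_log_add {τ σ : ℝ} (hτ : 0 < τ) (hτσ : τ ≤ σ) :
    MonotoneOn (fun x ↦ (1 - τ / σ) * log x - log (x + τ) + log (x + σ)) (Ioi 0) := by
  have hσ : 0 < σ := hτ.trans_le hτσ
  have hderiv : ∀ x ∈ Ioi (0 : ℝ), HasDerivAt
      (fun x ↦ (1 - τ / σ) * log x - log (x + τ) + log (x + σ))
      ((1 - τ / σ) * x⁻¹ - (x + τ)⁻¹ + (x + σ)⁻¹) x := fun x (hx : 0 < x) ↦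
    (((hasDerivAt_log hx.ne').const_mul _).sub
      (((hasDerivAt_id x).add_const τ).log (by positivity) |>.congr_deriv (one_div _))).add
      (((hasDerivAt_id x).add_const σ).log (by positivity) |>.congr_deriv (one_div _))
  refine monotoneOn_of_hasDerivWithinAt_nonneg (convex_Ioi 0)
    (fun x hx ↦ (hderiv x hx).continuousAt.continuousWithinAt)
    (fun x hx ↦ (hderiv x (interior_subset hx)).hasDerivWithinAt) fun x hx ↦ ?_
  rw [interior_Ioi] at hx
  have hx : 0 < x := hx
  have key : (σ - τ) / ((x + τ) * (x + σ)) ≤ (σ - τ) / (σ * x) :=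
    div_le_div_of_nonneg_left (by linarith) (by positivity) (by nlinarith)
  have e1 : (x + τ)⁻¹ - (x + σ)⁻¹ = (σ - τ) / ((x + τ) * (x + σ)) := by field_simp; ring
  have e2 : (1 - τ / σ) * x⁻¹ = (σ - τ) / (σ * x) := by field_simp
  linarith

theorem log_div_le_mul_log {s t σ τ : ℝ} (ht : 0 < t) (hts : t ≤ s) (hτ : 0 < τ)
    (hτσ : τ ≤ σ) :
    log ((s + τ * t) / (1 + τ) / ((s + σ * t) / (1 + σ))) ≤ (1 - τ / σ) * log (s / t) := by
  set μ := s / t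
  have hμ : 1 ≤ μ := (one_le_div ht).2 hts
  have hσ : 0 < σ := hτ.trans_le hτσ
  have hmono := monotoneOn_mul_log_sub_log_add_add_log_add hτ hτσ
    (mem_Ioi.2 one_pos) (mem_Ioi.2 (by linarith)) hμ
  have hratio : (s + τ * t) / (1 + τ) / ((s + σ * t) / (1 + σ)) =
      (μ + τ) / (μ + σ) / ((1 + τ) / (1 + σ)) := by
    simp only [μ]
    field_simp
  rw [hratio, log_div (by positivity) (by positivity), log_div (by positivity) (by positivity),
    log_div (by positivity) (by positivity)]
  simp only [log_one, mul_zero] at hmono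
  linarith

theorem IsClosedCone.coneTheta_le_mul_log {E : Type*} [NormedAddCommGroup E]
    [NormedSpace ℝ E] {C : Set E} (hC : IsClosedCone C) {x y : E} (hx : x ∈ C) {s t σ τ : ℝ}
    (ht : 0 < t) (hτ : 0 < τ) (ha : s • x - y ∈ insert 0 C) (hb : y - t • x ∈ C)
    (hσb : σ • (y - t • x) - (s • x - y) ∈ insert 0 C)
    (hτb : (s • x - y) - τ • (y - t • x) ∈ insert 0 C) :
    coneTheta C x y ≤ ENNReal.ofReal ((1 - τ / σ) * log (s / t)) := by
  have hts : t ≤ s := hC.le_of_sub_mem_insert hx ha (Or.inr hb)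
  have hτσ : τ ≤ σ := hC.le_of_sub_mem_insert hb hσb hτb
  have hσ : 0 < σ := hτ.trans_le hτσ
  have hs : 0 < s := ht.trans_le hts
  have hs' : ((s + τ * t) / (1 + τ)) • x - y ∈ insert 0 C := by
    convert hC.smul_mem_insert (inv_pos.2 (by positivity : 0 < 1 + τ)) hτb using 1
    match_scalars <;> field_simp <;> ring
  have ht' : y - ((s + σ * t) / (1 + σ)) • x ∈ insert 0 C := by
    convert hC.smul_mem_insert (inv_pos.2 (by positivity : 0 < 1 + σ)) hσb using 1
    match_scalars <;> field_simp <;> ring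
  calc coneTheta C x y ≤ _ := coneTheta_le_ofReal_log (by positivity) (by positivity) hs' ht'
    _ ≤ _ := ENNReal.ofReal_le_ofReal (log_div_le_mul_log ht hts hτ hτσ)

theorem le_ofReal_of_forall_gt {X : ℝ≥0∞} {f : ℝ → ℝ} {D : ℝ} (hf : ContinuousAt f D)
    (h : ∀ r > D, X ≤ ENNReal.ofReal (f r)) : X ≤ ENNReal.ofReal (f D) :=
  ge_of_tendsto ((ENNReal.continuous_ofReal.continuousAt.comp hf).tendsto.mono_left
    nhdsWithin_le_nhds) (eventually_nhdsWithin_of_forall (s := Ioi D) h)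

theorem coneTheta_map_le_mul_log {E₁ E₂ : Type*} [NormedAddCommGroup E₁] [NormedSpace ℝ E₁]
    [NormedAddCommGroup E₂] [NormedSpace ℝ E₂] {C₁ : Set E₁} {C₂ : Set E₂}
    (h₂ : IsClosedCone C₂) (L : E₁ →ₗ[ℝ] E₂) (hL : ∀ v ∈ C₁, L v ∈ C₂) {D : ℝ} (hD₀ : 0 ≤ D)
    (hD : ∀ v ∈ C₁, ∀ w ∈ C₁, coneTheta C₂ (L v) (L w) ≤ ENNReal.ofReal D)
    {φ ψ : E₁} (hφ : φ ∈ C₁) {s t : ℝ} (hs : 0 < s) (ht : 0 < t)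
    (ha : s • φ - ψ ∈ insert 0 C₁) (hb : ψ - t • φ ∈ insert 0 C₁) :
    coneTheta C₂ (L φ) (L ψ) ≤ ENNReal.ofReal ((1 - exp (-D)) * log (s / t)) := by
  rcases ha with ha | ha
  · rw [← sub_eq_zero.1 ha, map_smul, coneTheta_smul_eq_zero hs]
    exact zero_le
  rcases hb with hb | hb
  · rw [sub_eq_zero.1 hb, map_smul, coneTheta_smul_eq_zero ht]
    exact zero_le
  have hLa : s • L φ - L ψ ∈ C₂ := by simpa using hL _ ha
  have hLb : L ψ - t • L φ ∈ C₂ := by simpa using hL _ hb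
  have hts : t ≤ s := h₂.le_of_sub_mem_insert (hL φ hφ) (Or.inr hLa) (Or.inr hLb)
  refine le_ofReal_of_forall_gt (f := fun r ↦ (1 - exp (-r)) * log (s / t)) (by fun_prop)
    fun r hr ↦ ?_
  have hlt : coneTheta C₂ (L (ψ - t • φ)) (L (s • φ - ψ)) < ENNReal.ofReal r :=
    (hD _ hb _ ha).trans_lt (ENNReal.ofReal_lt_ofReal_iff'.2 ⟨hr, hD₀.trans_lt hr⟩)
  simp only [map_sub, map_smul] at hlt
  obtain ⟨σ, τ, hσ, hτ, hσb, hτb, hlog⟩ := exists_log_div_lt_of_coneTheta_lt hlt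
  have hexp : exp (-r) < τ / σ := by
    rw [exp_neg, ← inv_div, inv_lt_inv₀ (exp_pos r) (by positivity)]
    exact (log_lt_iff_lt_exp (by positivity)).1 hlog
  refine (h₂.coneTheta_le_mul_log (hL φ hφ) ht hτ (Or.inr hLa) hLb hσb hτb).trans ?_
  gcongr
  exact log_nonneg ((one_le_div ht).2 hts)

theorem cone_contraction_general {E₁ E₂ : Type*}
    [NormedAddCommGroup E₁] [NormedSpace ℝ E₁]
    [NormedAddCommGroup E₂] [NormedSpace ℝ E₂]
    (C₁ : Set E₁) (C₂ : Set E₂) (h₂ : IsClosedCone C₂)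
    (L : E₁ →ₗ[ℝ] E₂) (hL : ∀ v ∈ C₁, L v ∈ C₂)
    (Δ : ℝ≥0∞)
    (hΔ : Δ = ⨆ (v : E₁) (_ : v ∈ C₁) (w : E₁) (_ : w ∈ C₁), coneTheta C₂ (L v) (L w))
    (hΔfin : Δ ≠ ⊤) (hΔpos : 0 < Δ) :
    ∀ φ ∈ C₁, ∀ ψ ∈ C₁,
      coneTheta C₂ (L φ) (L ψ) ≤
        ENNReal.ofReal (1 - Real.exp (-Δ.toReal)) * coneTheta C₁ φ ψ := by
  intro φ hφ ψ _
  have hκ : 0 < 1 - exp (-Δ.toReal) := by simpa using ENNReal.toReal_pos hΔpos.ne' hΔfin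
  have hκ₀ : ENNReal.ofReal (1 - exp (-Δ.toReal)) ≠ 0 := (ENNReal.ofReal_pos.2 hκ).ne'
  have hD : ∀ v ∈ C₁, ∀ w ∈ C₁, coneTheta C₂ (L v) (L w) ≤ ENNReal.ofReal Δ.toReal := by
    rw [ENNReal.ofReal_toReal hΔfin, hΔ]
    exact fun v hv w hw ↦ le_iSup₂_of_le v hv (le_iSup₂_of_le w hw le_rfl)
  -- after dividing by the factor, the right side is an infimum that can be bounded termwise
  rw [mul_comm, ← ENNReal.div_le_iff hκ₀ ENNReal.ofReal_ne_top]
  refine le_coneTheta fun s t hs ht ha hb ↦ ?_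
  rw [ENNReal.div_le_iff hκ₀ ENNReal.ofReal_ne_top, ← ENNReal.ofReal_mul' hκ.le, mul_comm]
  exact coneTheta_map_le_mul_log h₂ L hL ENNReal.toReal_nonneg hD hφ hs ht ha hb

/-- If `L : E₁ → E₂` is linear with `L(C₁) ⊆ C₂` and the `Θ_{C₂}`-diameter
`Δ` of `L(C₁)` is finite and strictly positive, then
`Θ_{C₂}(Lφ, Lψ) ≤ (1 - e^{-Δ}) · Θ_{C₁}(φ, ψ)` for all `φ, ψ ∈ C₁`. -/
theorem cone_contraction {E₁ E₂ : Type*}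
    [NormedAddCommGroup E₁] [NormedSpace ℝ E₁] [CompleteSpace E₁]
    [NormedAddCommGroup E₂] [NormedSpace ℝ E₂] [CompleteSpace E₂]
    (C₁ : Set E₁) (C₂ : Set E₂) (h₁ : IsClosedCone C₁) (h₂ : IsClosedCone C₂)
    (L : E₁ →ₗ[ℝ] E₂) (hL : ∀ v ∈ C₁, L v ∈ C₂)
    (Δ : ℝ≥0∞)
    (hΔ : Δ = ⨆ (v : E₁) (_ : v ∈ C₁) (w : E₁) (_ : w ∈ C₁), coneTheta C₂ (L v) (L w))
    (hΔfin : Δ ≠ ⊤) (hΔpos : 0 < Δ) :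
    ∀ φ ∈ C₁, ∀ ψ ∈ C₁,
      coneTheta C₂ (L φ) (L ψ) ≤
        ENNReal.ofReal (1 - Real.exp (-Δ.toReal)) * coneTheta C₁ φ ψ :=
  cone_contraction_general C₁ C₂ h₂ L hL Δ hΔ hΔfin hΔpos
end
end

section
/- Let (Q,d) be a metric space, α ∈ (0,1], δ > 0, r ∈ [0,1] and C > 0, and let φ : Q → ℝ satisfy |φ(x) − φ(y)| ≤ C·d(x,y)^α whenever d(x,y) ≤ δ. Assume that for every pair x, y ∈ Q with δ < d(x,y) < (1+r)δ there exists z ∈ Q with d(x,z) = δ and d(z,y) ≤ r·d(x,z). Then |φ(x) − φ(y)| ≤ C·(1 + r^α)·d(x,y)^α for all x, y ∈ Q with d(x,y) < (1+r)δ. -/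
/-!
Pairs at distance at most `δ` are covered by the hypothesis. A pair at distance `d ∈ (δ, (1+r)δ)`
is split at the interpolating point `z` into a step of length `δ` and one of length at most
`rδ ≤ δ`, giving `C δ^α + C (rδ)^α = C (1 + r^α) δ^α ≤ C (1 + r^α) d^α`.
-/

open Metric

def HolderInBalls {Q : Type*} [PseudoMetricSpace Q] (C α δ : ℝ) (φ : Q → ℝ) : Prop :=
  ∀ x y : Q, dist x y ≤ δ → |φ x - φ y| ≤ C * dist x y ^ α

namespace HolderInBalls

variable {Q : Type*} [PseudoMetricSpace Q] {C α δ : ℝ} {φ : Q → ℝ}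

theorem mono {C' δ' : ℝ} (hφ : HolderInBalls C α δ φ) (hC : C ≤ C') (hδ : δ' ≤ δ) :
    HolderInBalls C' α δ' φ := fun x y hxy =>
  (hφ x y (hxy.trans hδ)).trans
    (mul_le_mul_of_nonneg_right hC (Real.rpow_nonneg dist_nonneg _))

theorem abs_sub_le_of_dist_eq_of_dist_le {r : ℝ} (hφ : HolderInBalls C α δ φ)
    (hα : 0 ≤ α) (hC : 0 ≤ C) (hr0 : 0 ≤ r) (hr1 : r ≤ 1) {x y z : Q}
    (hxz : dist x z = δ) (hzy : dist z y ≤ r * δ) :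
    |φ x - φ y| ≤ C * (1 + r ^ α) * δ ^ α := by
  have hδ : 0 ≤ δ := hxz ▸ dist_nonneg
  have hzy_δ : dist z y ≤ δ := hzy.trans (mul_le_of_le_one_left hδ hr1)
  calc |φ x - φ y| ≤ |φ x - φ z| + |φ z - φ y| := abs_sub_le _ _ _
    _ ≤ C * δ ^ α + C * (r * δ) ^ α := by
        gcongr
        · simpa only [hxz] using hφ x z hxz.le
        · exact (hφ z y hzy_δ).trans (by gcongr)
    _ = C * (1 + r ^ α) * δ ^ α := by rw [Real.mul_rpow hr0 hδ]; ring

end HolderInBalls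

theorem holder_in_larger_balls_general {Q : Type*} [MetricSpace Q]
    (α : ℝ) (hα : 0 < α)
    (δ : ℝ)
    (r : ℝ) (hr0 : 0 ≤ r) (hr1 : r ≤ 1)
    (C : ℝ) (hC : 0 < C)
    (φ : Q → ℝ)
    (hφ : ∀ x y : Q, dist x y ≤ δ → |φ x - φ y| ≤ C * dist x y ^ α)
    (hmid : ∀ x y : Q, δ < dist x y → dist x y < (1 + r) * δ →
      ∃ z : Q, dist x z = δ ∧ dist z y ≤ r * dist x z) :
    ∀ x y : Q, dist x y < (1 + r) * δ →
      |φ x - φ y| ≤ C * (1 + r ^ α) * dist x y ^ α := by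
  have hφ : HolderInBalls C α δ φ := hφ
  have hC_le : C ≤ C * (1 + r ^ α) :=
    le_mul_of_one_le_right hC.le (le_add_of_nonneg_right (Real.rpow_nonneg hr0 _))
  intro x y hxy
  rcases le_or_gt (dist x y) δ with hnear | hfar
  · exact hφ.mono hC_le le_rfl x y hnear
  · obtain ⟨z, hxz, hzy⟩ := hmid x y hfar hxy
    rw [hxz] at hzy
    calc |φ x - φ y| ≤ C * (1 + r ^ α) * δ ^ α :=
          hφ.abs_sub_le_of_dist_eq_of_dist_le hα.le hC.le hr0 hr1 hxz hzy
      _ ≤ C * (1 + r ^ α) * dist x y ^ α := by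
          gcongr
          exact hxz ▸ dist_nonneg

/-- If `φ` is `(C,α)`-Hölder in balls of radius `δ` and between any two points
at distance in `(δ, (1+r)δ)` one can interpolate a point `z` with `d(x,z) = δ` and
`d(z,y) ≤ r·d(x,z)`, then `φ` is `(C(1+r^α), α)`-Hölder in balls of radius `(1+r)δ`. -/
theorem holder_in_larger_balls {Q : Type*} [MetricSpace Q]
    (α : ℝ) (hα : 0 < α) (hα1 : α ≤ 1)
    (δ : ℝ) (hδ : 0 < δ)
    (r : ℝ) (hr0 : 0 ≤ r) (hr1 : r ≤ 1)
    (C : ℝ) (hC : 0 < C)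
    (φ : Q → ℝ)
    (hφ : ∀ x y : Q, dist x y ≤ δ → |φ x - φ y| ≤ C * dist x y ^ α)
    (hmid : ∀ x y : Q, δ < dist x y → dist x y < (1 + r) * δ →
      ∃ z : Q, dist x z = δ ∧ dist z y ≤ r * dist x z) :
    ∀ x y : Q, dist x y < (1 + r) * δ →
      |φ x - φ y| ≤ C * (1 + r ^ α) * dist x y ^ α :=
  holder_in_larger_balls_general α hα δ r hr0 hr1 C hC φ hφ hmid
end

section
/- Let G be the projection map on Q = R₁ ∪ R₂ ∪ R₃ and let P be the common refinement ⋁_{j=0}^{3} G^{−j}({R₁,R₂,R₃}). Then P is a finite cover of Q such that G³ is injective on each element of P and every x ∈ Q has at most one G³-preimage in each element of P. Moreover, for every δ with 1/2 ≤ δ ≤ 3/4 − 2ρ there is r := e³/(δ(e³ − 1) + 1) − 1 < 1 such that whenever x, y ∈ Q satisfy d(x,y) < δ, any two G³-preimages x_i, y_i of x and y lying in the same element of P satisfy d(x_i, y_i) < (1 + r)·δ. -/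
open Metric Set MeasureTheory Filter
open scoped ENNReal Classical

noncomputable section

/-- Points of `ℝ³` with the Euclidean metric. -/
abbrev E3 : Type := EuclideanSpace ℝ (Fin 3)

/-- The rectangle `R₁ = [0,ρ] × [0,1] × {0}`. -/
def R1 (ρ : ℝ) : Set E3 := {p | p 0 ∈ Icc (0 : ℝ) ρ ∧ p 1 ∈ Icc (0 : ℝ) 1 ∧ p 2 = 0}

/-- The rectangle `R₂ = [3/4−ρ, 3/4] × [0,σ] × {0}`. -/
def R2 (ρ σ : ℝ) : Set E3 :=
  {p | p 0 ∈ Icc (3 / 4 - ρ) (3 / 4 : ℝ) ∧ p 1 ∈ Icc (0 : ℝ) σ ∧ p 2 = 0}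

/-- The rectangle `R₃ = [0,ρ] × [1+ε, 2+ε] × {5/6}`. -/
def R3 (ρ ε : ℝ) : Set E3 :=
  {p | p 0 ∈ Icc (0 : ℝ) ρ ∧ p 1 ∈ Icc (1 + ε) (2 + ε) ∧ p 2 = 5 / 6}

/-- `Q = R₁ ∪ R₂ ∪ R₃`. -/
def Qset (ρ σ ε : ℝ) : Set E3 := R1 ρ ∪ R2 ρ σ ∪ R3 ρ ε

/-- `g₀ = f⁻¹`, the inverse of `f(y) = 1/(1 − (1 − 1/y)e^{−1})`;
explicitly `g₀(x) = 1/(1 − e + e/x)`. -/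
def g0 (y : ℝ) : ℝ := 1 / (1 - Real.exp 1 + Real.exp 1 / y)

/-- The projection map `G`: `G(x,y,z) = (x/ρ, g₀(y), 0)` on `R₁ ∪ R₃` and
`G(x,y,z) = ((3/4 − x)/ρ, 1 − y/σ, 5/6)` on `R₂` (where `γ = 1/ρ`). -/
def Gmap (ρ σ : ℝ) (p : E3) : E3 :=
  if p ∈ R2 ρ σ then WithLp.toLp 2 ![(3 / 4 - p 0) / ρ, 1 - p 1 / σ, 5 / 6]
  else WithLp.toLp 2 ![p 0 / ρ, g0 (p 1), 0]

/-- The set of `G`-preimages in `Q` of a point `x`. -/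
def preQ (ρ σ ε : ℝ) (x : E3) : Set E3 := {y | y ∈ Qset ρ σ ε ∧ Gmap ρ σ y = x}

/-- The Ruelle–Perron–Frobenius (transfer) operator of `(G, φ⋆)`:
`(Lψ)(x) = Σ_{y ∈ Q, G(y) = x} e^{φ⋆(y)} ψ(y)`. -/
def transferOp (ρ σ ε : ℝ) (φs : E3 → ℝ) (ψ : E3 → ℝ) (x : E3) : ℝ :=
  ∑' y : preQ ρ σ ε x, Real.exp (φs y) * ψ y

/-- `inf_Q φ`. -/
def infQ (ρ σ ε : ℝ) (φ : E3 → ℝ) : ℝ := sInf (φ '' Qset ρ σ ε)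

/-- `sup_Q φ`. -/
def supQ (ρ σ ε : ℝ) (φ : E3 → ℝ) : ℝ := sSup (φ '' Qset ρ σ ε)

/-- The sup norm `|φ|₀` over `Q`. -/
def supAbsQ (ρ σ ε : ℝ) (φ : E3 → ℝ) : ℝ := sSup ((fun x => |φ x|) '' Qset ρ σ ε)

/-- `|φ|_{α,δ}`: the smallest Hölder constant of `φ` on `Q` in balls of radius `δ`. -/
def holderQδ (ρ σ ε α δ : ℝ) (φ : E3 → ℝ) : ℝ :=
  sInf {C : ℝ | 0 ≤ C ∧ ∀ x ∈ Qset ρ σ ε, ∀ y ∈ Qset ρ σ ε,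
    dist x y ≤ δ → |φ x - φ y| ≤ C * dist x y ^ α}

/-- `|φ|_α`: the smallest global Hölder constant of `φ` on `Q`. -/
def holderQ (ρ σ ε α : ℝ) (φ : E3 → ℝ) : ℝ :=
  sInf {C : ℝ | 0 ≤ C ∧ ∀ x ∈ Qset ρ σ ε, ∀ y ∈ Qset ρ σ ε,
    |φ x - φ y| ≤ C * dist x y ^ α}

/-- Membership in the cone `C_{k,δ}` of locally Hölder observables on `Q`:
continuous on `Q`, positive on `Q`, and `|φ|_{α,δ} ≤ k · inf_Q φ` (expressed by the
defining Hölder bound with constant `k · inf_Q φ`). -/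
def memConeQ (ρ σ ε α δ k : ℝ) (φ : E3 → ℝ) : Prop :=
  ContinuousOn φ (Qset ρ σ ε) ∧ (∀ x ∈ Qset ρ σ ε, 0 < φ x) ∧
    ∀ x ∈ Qset ρ σ ε, ∀ y ∈ Qset ρ σ ε, dist x y ≤ δ →
      |φ x - φ y| ≤ k * infQ ρ σ ε φ * dist x y ^ α

/-- The property of the constant `m = m(δ)`: every function on `Q` that is `(C,α)`-Hölder
in balls of radius `δ` is globally `(m·C,α)`-Hölder on `Q`. -/
def mProp (ρ σ ε α δ m : ℝ) : Prop :=
  ∀ C : ℝ, 0 ≤ C → ∀ φ : E3 → ℝ,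
    (∀ x ∈ Qset ρ σ ε, ∀ y ∈ Qset ρ σ ε, dist x y ≤ δ → |φ x - φ y| ≤ C * dist x y ^ α) →
    ∀ x ∈ Qset ρ σ ε, ∀ y ∈ Qset ρ σ ε, |φ x - φ y| ≤ m * C * dist x y ^ α

/-- Condition (★) on the potential `φ⋆`:
`e^{3·var φ⋆}·e^{2α}·((2/3)e^{2α} + σ^α) + (10e^{3α}/3)·m·(diam Q)^α·|e^{3φ⋆}|_α / e^{3·inf φ⋆} < 1`. -/
def starCond (ρ σ ε α m : ℝ) (φs : E3 → ℝ) : Prop :=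
  Real.exp (3 * (supQ ρ σ ε φs - infQ ρ σ ε φs)) * Real.exp (2 * α) *
      ((2 / 3) * Real.exp (2 * α) + σ ^ α) +
    (10 * Real.exp (3 * α) / 3) * m * diam (Qset ρ σ ε) ^ α *
      holderQ ρ σ ε α (fun x => Real.exp (3 * φs x)) / Real.exp (3 * infQ ρ σ ε φs) < 1

/-- The element of the partition `P = ⋁_{j=0}^{3} G^{−j}({R₁,R₂,R₃})` with itinerary `i`:
points whose `j`-th iterate lies in the rectangle `R_{i(j)}` for `j = 0,1,2,3`. -/
def Pelem (ρ σ ε : ℝ) (i : Fin 4 → Fin 3) : Set E3 :=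
  {x | ∀ j : Fin 4, (Gmap ρ σ)^[(j : ℕ)] x ∈ ![R1 ρ, R2 ρ σ, R3 ρ ε] (i j)}

/-!
Along an orbit that stays in `Q` for three steps, `G` never acts as the branch on `R₂` (from
`R₂` it leaves `Q`), and the orbit cannot start in `R₃`, so `G³` is three applications of
`(x, y) ↦ (x/ρ, g₀ y)` on `R₁`. On `(0,1]`, `g₀` is the Möbius map `y ↦ y/(e − (e−1)y)`, and these
maps compose by multiplying the parameter, so `G³(x, y, 0) = (x/ρ³, y/(e³ − (e³−1)y), 0)` on each
element of `P`. Its inverse `(x, y) ↦ (ρ³x, φ y)` with `φ y = e³y/(1 + (e³−1)y)` shows injectivity.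
For the distance bound, `φ` is concave with `φ 0 = 0`, so `|φ a − φ b| ≤ φ |a − b|`, and the gain
`φ(δ)² − φ(s)² ≥ (δ² − s²)/e⁶` absorbs the first coordinate, which is contracted by `ρ³ < e⁻³`;
hence preimages are closer than `φ δ = (1 + r)δ`.
-/

def moebius (c y : ℝ) : ℝ := y / (c - (c - 1) * y)

def moebiusInv (c x : ℝ) : ℝ := c * x / (1 + (c - 1) * x)

section Moebius

variable {c d y : ℝ}

lemma moebius_denom_pos (hc : 0 < c) (hy : y ∈ Ioc 0 1) : 0 < c - (c - 1) * y := by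
  nlinarith [hy.1, hy.2]

lemma moebius_mem_Ioc_iff (hc : 0 < c) : moebius c y ∈ Ioc 0 1 ↔ y ∈ Ioc 0 1 := by
  refine ⟨fun ⟨hpos, hle⟩ => ?_, fun hy => ?_⟩
  · rcases div_pos_iff.1 hpos with ⟨hy, hD⟩ | ⟨hy, hD⟩
    · rw [moebius, div_le_one hD] at hle
      exact ⟨hy, by nlinarith⟩
    · rw [moebius, div_le_one_of_neg hD] at hle
      nlinarith
  · have hD := moebius_denom_pos hc hy
    refine ⟨div_pos hy.1 hD, (div_le_one hD).2 ?_⟩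
    nlinarith [hy.2]

lemma moebius_moebius (hd : 0 < d) (hy : y ∈ Ioc 0 1) :
    moebius c (moebius d y) = moebius (c * d) y := by
  have hD := moebius_denom_pos hd hy
  have h : c - (c - 1) * (y / (d - (d - 1) * y)) =
      (c * d - (c * d - 1) * y) / (d - (d - 1) * y) := by
    rw [eq_div_iff hD.ne', sub_mul, mul_assoc, div_mul_cancel₀ _ hD.ne']
    ring
  rw [moebius, moebius, h, div_div_div_cancel_right₀ hD.ne', moebius]

lemma moebiusInv_moebius (hc : 0 < c) (hy : y ∈ Ioc 0 1) : moebiusInv c (moebius c y) = y := by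
  have hD := moebius_denom_pos hc hy
  have h : 1 + (c - 1) * (y / (c - (c - 1) * y)) = c / (c - (c - 1) * y) := by
    field_simp
    ring
  rw [moebiusInv, moebius, h, mul_div_assoc', div_div_div_cancel_right₀ hD.ne',
    mul_div_cancel_left₀ _ hc.ne']

lemma abs_moebiusInv_sub_le {a b : ℝ} (hc : 1 ≤ c) (ha : 0 ≤ a) (hb : 0 ≤ b) :
    |moebiusInv c a - moebiusInv c b| ≤ moebiusInv c |a - b| := by
  have hk : 0 ≤ c - 1 := by linarith
  have hA : 0 < 1 + (c - 1) * a := by nlinarith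
  have hB : 0 < 1 + (c - 1) * b := by nlinarith
  have hS : 0 < 1 + (c - 1) * |a - b| := by nlinarith [abs_nonneg (a - b)]
  have hsum : |a - b| ≤ a + b := abs_sub_le_iff.2 ⟨by linarith, by linarith⟩
  rw [moebiusInv, moebiusInv, moebiusInv, div_sub_div _ _ hA.ne' hB.ne',
    show c * a * (1 + (c - 1) * b) - (1 + (c - 1) * a) * (c * b) = c * (a - b) by ring,
    abs_div, abs_mul, abs_of_pos (mul_pos hA hB), abs_of_nonneg (by linarith : 0 ≤ c),
    div_le_div_iff₀ (mul_pos hA hB) hS]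
  apply mul_le_mul_of_nonneg_left _ (by positivity)
  nlinarith [mul_nonneg hk (sub_nonneg.2 hsum), mul_nonneg (mul_nonneg hk hk) (mul_nonneg ha hb)]

lemma sq_sub_sq_div_le_sq_moebiusInv_sub_sq {s δ : ℝ} (hc : 1 ≤ c) (hs : 0 ≤ s)
    (hsδ : s ≤ δ) (hδ : δ ≤ 1) :
    (δ ^ 2 - s ^ 2) / c ^ 2 ≤ moebiusInv c δ ^ 2 - moebiusInv c s ^ 2 := by
  have hk : 0 ≤ c - 1 := by linarith
  have hA : 1 ≤ 1 + (c - 1) * s := by nlinarith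
  have hB : 1 ≤ 1 + (c - 1) * δ := by nlinarith
  have hAB : ((1 + (c - 1) * δ) * (1 + (c - 1) * s)) ^ 2 ≤ (c ^ 2) ^ 2 := by
    have hBA : (1 + (c - 1) * δ) * (1 + (c - 1) * s) ≤ c * c :=
      mul_le_mul (by nlinarith) (by nlinarith) (by linarith) (by linarith)
    exact pow_le_pow_left₀ (by nlinarith) (by linarith) 2
  have hdiff : δ ^ 2 - s ^ 2 ≤ (δ * (1 + (c - 1) * s)) ^ 2 - (s * (1 + (c - 1) * δ)) ^ 2 := by
    nlinarith [mul_nonneg (mul_nonneg (mul_nonneg hk (hs.trans hsδ)) hs) (sub_nonneg.2 hsδ)]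
  have hδs : 0 ≤ δ ^ 2 - s ^ 2 := by nlinarith
  have hA2 : 0 < (1 + (c - 1) * s) ^ 2 := by positivity
  have hB2 : 0 < (1 + (c - 1) * δ) ^ 2 := by positivity
  rw [moebiusInv, moebiusInv, div_pow, div_pow, div_sub_div _ _ hB2.ne' hA2.ne',
    div_le_div_iff₀ (by positivity) (mul_pos hB2 hA2)]
  nlinarith [mul_le_mul_of_nonneg_left hAB hδs,
    mul_le_mul_of_nonneg_left hdiff (by positivity : (0 : ℝ) ≤ c ^ 4)]

end Moebius

-- Lean's `e / 0 = 0` makes `g₀ 0 = 1 / (1 - e)`.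
lemma g0_zero_neg : g0 0 < 0 := by
  rw [g0, div_zero, add_zero, one_div, inv_lt_zero]
  linarith [Real.add_one_lt_exp (one_ne_zero : (1 : ℝ) ≠ 0)]

lemma g0_eq_moebius {y : ℝ} (hy : y ≠ 0) : g0 y = moebius (Real.exp 1) y := by
  rw [g0, moebius, show 1 - Real.exp 1 + Real.exp 1 / y =
      (Real.exp 1 - (Real.exp 1 - 1) * y) / y by field_simp; ring, one_div_div]

lemma g0_mem_Ioc_iff {y : ℝ} : g0 y ∈ Ioc 0 1 ↔ y ∈ Ioc 0 1 := by
  rcases eq_or_ne y 0 with rfl | hy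
  · simp [not_lt.2 g0_zero_neg.le]
  · rw [g0_eq_moebius hy, moebius_mem_Ioc_iff (Real.exp_pos 1)]

lemma g0_g0_g0 {y : ℝ} (hy : y ∈ Ioc 0 1) : g0 (g0 (g0 y)) = moebius (Real.exp 3) y := by
  have he := Real.exp_pos 1
  have h1 := (moebius_mem_Ioc_iff he).2 hy
  have h2 := (moebius_mem_Ioc_iff he).2 h1
  rw [g0_eq_moebius hy.1.ne', g0_eq_moebius h1.1.ne', g0_eq_moebius h2.1.ne',
    moebius_moebius he hy, moebius_moebius (mul_pos he he) hy, ← Real.exp_add, ← Real.exp_add]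
  norm_num

lemma E3.dist_sq_eq (x y : E3) :
    dist x y ^ 2 = (x 0 - y 0) ^ 2 + (x 1 - y 1) ^ 2 + (x 2 - y 2) ^ 2 := by
  rw [EuclideanSpace.dist_eq, Real.sq_sqrt (by positivity), Fin.sum_univ_three]
  simp [Real.dist_eq, sq_abs]

lemma dist_lt_moebiusInv_of_dist_lt {a c δ : ℝ} {x y : E3} (hc : 1 ≤ c) (hac : (a * c) ^ 2 < 1)
    (hδ : δ ≤ 1) (hx : 0 ≤ x 1) (hy : 0 ≤ y 1) (hxy : dist x y < δ) :
    dist (WithLp.toLp 2 ![a * x 0, moebiusInv c (x 1), 0])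
      (WithLp.toLp 2 ![a * y 0, moebiusInv c (y 1), 0]) < moebiusInv c δ := by
  set s := |x 1 - y 1|
  have hδ0 : 0 ≤ δ := dist_nonneg.trans hxy.le
  have hts : (x 0 - y 0) ^ 2 + s ^ 2 < δ ^ 2 := by
    have := pow_lt_pow_left₀ hxy dist_nonneg two_ne_zero
    rw [E3.dist_sq_eq] at this
    nlinarith [sq_abs (x 1 - y 1), sq_nonneg (x 2 - y 2)]
  have hsδ : s < δ := lt_of_pow_lt_pow_left₀ 2 hδ0 (by nlinarith [sq_nonneg (x 0 - y 0)])
  have hφs : (moebiusInv c (x 1) - moebiusInv c (y 1)) ^ 2 ≤ moebiusInv c s ^ 2 :=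
    sq_le_sq' (abs_le.1 (abs_moebiusInv_sub_le hc hx hy)).1
      (abs_le.1 (abs_moebiusInv_sub_le hc hx hy)).2
  have hgap := sq_sub_sq_div_le_sq_moebiusInv_sub_sq hc (abs_nonneg _) hsδ.le hδ
  have hfirst : a ^ 2 * (x 0 - y 0) ^ 2 < (δ ^ 2 - s ^ 2) / c ^ 2 := by
    rw [lt_div_iff₀ (by positivity)]
    nlinarith [mul_le_mul_of_nonneg_left (by linarith : (x 0 - y 0) ^ 2 ≤ δ ^ 2 - s ^ 2)
      (by positivity : 0 ≤ (a * c) ^ 2)]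
  refine lt_of_pow_lt_pow_left₀ 2 (by unfold moebiusInv; positivity) ?_
  rw [E3.dist_sq_eq]
  simp only [Matrix.cons_val_zero, Matrix.cons_val_one, Matrix.cons_val_two,
    Matrix.tail_cons, Matrix.head_cons]
  nlinarith

section Projection

variable {ρ σ ε : ℝ} {p : E3} {i : Fin 4 → Fin 3}

lemma Gmap_of_mem_R2 (hp : p ∈ R2 ρ σ) :
    Gmap ρ σ p = WithLp.toLp 2 ![(3 / 4 - p 0) / ρ, 1 - p 1 / σ, 5 / 6] :=
  if_pos hp

lemma Gmap_of_not_mem_R2 (hp : p ∉ R2 ρ σ) :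
    Gmap ρ σ p = WithLp.toLp 2 ![p 0 / ρ, g0 (p 1), 0] :=
  if_neg hp

lemma Gmap_not_mem_Qset_of_mem_R2 (hε : 0 < ε) (hp : p ∈ R2 ρ σ) :
    Gmap ρ σ p ∉ Qset ρ σ ε := by
  have hσ : 0 ≤ p 1 / σ := div_nonneg hp.2.1.1 (hp.2.1.1.trans hp.2.1.2)
  have hz : (WithLp.toLp 2 ![(3 / 4 - p 0) / ρ, 1 - p 1 / σ, 5 / 6] : E3) 2 ≠ 0 := by simp
  rw [Gmap_of_mem_R2 hp]
  rintro ((h | h) | h)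
  · exact hz h.2.2
  · exact hz h.2.2
  · have hy : 1 + ε ≤ 1 - p 1 / σ := h.2.1.1
    linarith

lemma mem_Qset_iff : p ∈ Qset ρ σ ε ↔ ∃ k : Fin 3, p ∈ ![R1 ρ, R2 ρ σ, R3 ρ ε] k := by
  simp [Qset, Fin.exists_fin_succ, or_assoc]

lemma coord_one_nonneg_of_mem_Qset (hε : 0 ≤ ε) (hp : p ∈ Qset ρ σ ε) : 0 ≤ p 1 := by
  rcases hp with (h | h) | h
  · exact h.2.1.1
  · exact h.2.1.1
  · linarith [h.2.1.1]

lemma coord_one_mem_Ioc_of_Gmap (hp : p ∉ R2 ρ σ) (h : Gmap ρ σ p 1 ∈ Ioc 0 1) :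
    p 1 ∈ Ioc 0 1 := by
  rwa [Gmap_of_not_mem_R2 hp, PiLp.toLp_apply, Matrix.cons_val_one, Matrix.cons_val_zero,
    g0_mem_Ioc_iff] at h

lemma iterate_mem_Qset_of_mem_Pelem (hp : p ∈ Pelem ρ σ ε i) (j : ℕ) (hj : j < 4) :
    (Gmap ρ σ)^[j] p ∈ Qset ρ σ ε :=
  mem_Qset_iff.2 ⟨i ⟨j, hj⟩, hp ⟨j, hj⟩⟩

lemma iterate_not_mem_R2_of_mem_Pelem (hε : 0 < ε) (hp : p ∈ Pelem ρ σ ε i) (j : ℕ)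
    (hj : j < 3) : (Gmap ρ σ)^[j] p ∉ R2 ρ σ := fun h => by
  have := iterate_mem_Qset_of_mem_Pelem hp (j + 1) (Nat.succ_lt_succ hj)
  rw [Function.iterate_succ_apply'] at this
  exact Gmap_not_mem_Qset_of_mem_R2 hε h this

lemma coord_one_mem_Ioc_of_mem_Pelem (hε : 0 < ε) (hp : p ∈ Pelem ρ σ ε i) :
    p 1 ∈ Ioc 0 1 := by
  have hR2 := iterate_not_mem_R2_of_mem_Pelem hε hp
  have hz : ((Gmap ρ σ)^[2] p) 2 = 0 := by
    rw [Function.iterate_succ_apply', Gmap_of_not_mem_R2 (hR2 1 (by norm_num))]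
    rfl
  have hR1 : (Gmap ρ σ)^[2] p ∈ R1 ρ := by
    rcases iterate_mem_Qset_of_mem_Pelem hp 2 (by norm_num) with (h | h) | h
    · exact h
    · exact absurd h (hR2 2 (by norm_num))
    · exact absurd (hz.symm.trans h.2.2) (by norm_num)
  have hG : 0 ≤ g0 (((Gmap ρ σ)^[2] p) 1) := by
    have := coord_one_nonneg_of_mem_Qset hε.le (iterate_mem_Qset_of_mem_Pelem hp 3 (by norm_num))
    rwa [Function.iterate_succ_apply', Gmap_of_not_mem_R2 (hR2 2 (by norm_num))] at this
  have h2 : ((Gmap ρ σ)^[2] p) 1 ∈ Ioc 0 1 := by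
    refine ⟨hR1.2.1.1.lt_of_ne ?_, hR1.2.1.2⟩
    rintro h
    rw [← h] at hG
    exact not_le.2 g0_zero_neg hG
  rw [Function.iterate_succ_apply'] at h2
  exact coord_one_mem_Ioc_of_Gmap (hR2 0 (by norm_num))
    (coord_one_mem_Ioc_of_Gmap (hR2 1 (by norm_num)) h2)

lemma iterate_three_of_mem_Pelem (hε : 0 < ε) (hp : p ∈ Pelem ρ σ ε i) :
    (Gmap ρ σ)^[3] p = WithLp.toLp 2 ![p 0 / ρ ^ 3, moebius (Real.exp 3) (p 1), 0] := by
  have hR2 := iterate_not_mem_R2_of_mem_Pelem hε hp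
  have h0 : p ∉ R2 ρ σ := hR2 0 (by norm_num)
  have h1 : Gmap ρ σ p ∉ R2 ρ σ := hR2 1 (by norm_num)
  have h2 : Gmap ρ σ (Gmap ρ σ p) ∉ R2 ρ σ := hR2 2 (by norm_num)
  rw [Function.iterate_succ_apply', Function.iterate_succ_apply', Function.iterate_one,
    Gmap_of_not_mem_R2 h2, Gmap_of_not_mem_R2 h1, Gmap_of_not_mem_R2 h0]
  simp only [Matrix.cons_val_zero, Matrix.cons_val_one]
  rw [g0_g0_g0 (coord_one_mem_Ioc_of_mem_Pelem hε hp), show p 0 / ρ / ρ / ρ = p 0 / ρ ^ 3 by ring]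

lemma eq_of_mem_Pelem (hρ : ρ ≠ 0) (hε : 0 < ε) (hp : p ∈ Pelem ρ σ ε i) :
    p = WithLp.toLp 2
      ![ρ ^ 3 * (Gmap ρ σ)^[3] p 0, moebiusInv (Real.exp 3) ((Gmap ρ σ)^[3] p 1), 0] := by
  have hy := coord_one_mem_Ioc_of_mem_Pelem hε hp
  have hQ : p ∈ Qset ρ σ ε := iterate_mem_Qset_of_mem_Pelem hp 0 (by norm_num)
  have hR2 : p ∉ R2 ρ σ := iterate_not_mem_R2_of_mem_Pelem hε hp 0 (by norm_num)
  have hR1 : p ∈ R1 ρ := by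
    rcases hQ with (h | h) | h
    · exact h
    · exact absurd h hR2
    · linarith [h.2.1.1, hy.2]
  rw [iterate_three_of_mem_Pelem hε hp]
  ext j
  fin_cases j
  · simp only [Fin.zero_eta, Matrix.cons_val_zero]
    field_simp
  · simp [moebiusInv_moebius (Real.exp_pos 3) hy]
  · simp [hR1.2.2]

end Projection

theorem partition_into_injectivity_domains_general
    (ρ σ ε : ℝ) (hρ0 : 0 < ρ) (hρ : ρ < 1 / 3)
    (hε0 : 0 < ε)
    (δ : ℝ) (hδ1 : 1 / 2 ≤ δ) (hδ2 : δ ≤ 3 / 4 - 2 * ρ) :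
    (Set.range (Pelem ρ σ ε)).Finite ∧
    ({y : E3 | ∀ j : Fin 4, (Gmap ρ σ)^[(j : ℕ)] y ∈ Qset ρ σ ε} ⊆
      ⋃ i : Fin 4 → Fin 3, Pelem ρ σ ε i) ∧
    (∀ i : Fin 4 → Fin 3, Set.InjOn ((Gmap ρ σ)^[3]) (Pelem ρ σ ε i)) ∧
    (∀ x ∈ Qset ρ σ ε, ∀ i : Fin 4 → Fin 3, ∀ y₁ ∈ Pelem ρ σ ε i, ∀ y₂ ∈ Pelem ρ σ ε i,
      (Gmap ρ σ)^[3] y₁ = x → (Gmap ρ σ)^[3] y₂ = x → y₁ = y₂) ∧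
    Real.exp 3 / (δ * (Real.exp 3 - 1) + 1) - 1 < 1 ∧
    (∀ x ∈ Qset ρ σ ε, ∀ y ∈ Qset ρ σ ε, dist x y < δ →
      ∀ i : Fin 4 → Fin 3, ∀ x' ∈ Pelem ρ σ ε i, ∀ y' ∈ Pelem ρ σ ε i,
        (Gmap ρ σ)^[3] x' = x → (Gmap ρ σ)^[3] y' = y →
          dist x' y' < (1 + (Real.exp 3 / (δ * (Real.exp 3 - 1) + 1) - 1)) * δ) := by
  have hc : 1 < Real.exp 3 := Real.one_lt_exp_iff.2 (by norm_num)
  have hinj (i : Fin 4 → Fin 3) : InjOn ((Gmap ρ σ)^[3]) (Pelem ρ σ ε i) := fun p hp q hq h => by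
    rw [eq_of_mem_Pelem hρ0.ne' hε0 hp, eq_of_mem_Pelem hρ0.ne' hε0 hq, h]
  refine ⟨finite_range _, fun y hy => ?_, hinj,
    fun _ _ i _ h₁ _ h₂ e₁ e₂ => hinj i h₁ h₂ (e₁.trans e₂.symm), ?_, ?_⟩
  · choose k hk using fun j => mem_Qset_iff.1 (hy j)
    exact mem_iUnion.2 ⟨k, hk⟩
  · rw [sub_lt_iff_lt_add, div_lt_iff₀ (by nlinarith)]
    nlinarith
  · intro x hx y hy hxy i x' hx' y' hy' hx'x hy'y
    have hρe : (ρ ^ 3 * Real.exp 3) ^ 2 < 1 := by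
      rw [show Real.exp 3 = Real.exp 1 ^ 3 by rw [← Real.exp_nat_mul]; norm_num,
        show (ρ ^ 3 * Real.exp 1 ^ 3) ^ 2 = (ρ * Real.exp 1) ^ 6 by ring]
      exact pow_lt_one₀ (by positivity) (by nlinarith [Real.exp_one_lt_d9]) (by norm_num)
    rw [show (1 + (Real.exp 3 / (δ * (Real.exp 3 - 1) + 1) - 1)) * δ = moebiusInv (Real.exp 3) δ by
        rw [moebiusInv]; ring, eq_of_mem_Pelem hρ0.ne' hε0 hx', eq_of_mem_Pelem hρ0.ne' hε0 hy',
      hx'x, hy'y]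
    exact dist_lt_moebiusInv_of_dist_lt hc.le hρe (by linarith)
      (coord_one_nonneg_of_mem_Qset hε0.le hx) (coord_one_nonneg_of_mem_Qset hε0.le hy) hxy

/-- The partition `P = ⋁_{j=0}^{3} G^{−j}({R₁,R₂,R₃})` is a finite cover of
`Q` (of the points whose first three iterates remain in `Q`) by injective domains of `G³`;
every `x ∈ Q` has at most one `G³`-preimage in each element of `P`; and for
`1/2 ≤ δ ≤ 3/4 − 2ρ` and `r = e³/(δ(e³−1)+1) − 1 < 1`, any two `G³`-preimages of points at
distance `< δ` lying in the same element of `P` are at distance `< (1+r)δ`. -/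
theorem partition_into_injectivity_domains
    (ρ σ ε : ℝ) (hρ0 : 0 < ρ) (hρ : ρ < 1 / 3) (hσ0 : 0 < σ) (hσ : σ < 1 / 3)
    (hε0 : 0 < ε) (hε : ε < 1 / 100)
    (δ : ℝ) (hδ1 : 1 / 2 ≤ δ) (hδ2 : δ ≤ 3 / 4 - 2 * ρ) :
    (Set.range (Pelem ρ σ ε)).Finite ∧
    ({y : E3 | ∀ j : Fin 4, (Gmap ρ σ)^[(j : ℕ)] y ∈ Qset ρ σ ε} ⊆
      ⋃ i : Fin 4 → Fin 3, Pelem ρ σ ε i) ∧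
    (∀ i : Fin 4 → Fin 3, Set.InjOn ((Gmap ρ σ)^[3]) (Pelem ρ σ ε i)) ∧
    (∀ x ∈ Qset ρ σ ε, ∀ i : Fin 4 → Fin 3, ∀ y₁ ∈ Pelem ρ σ ε i, ∀ y₂ ∈ Pelem ρ σ ε i,
      (Gmap ρ σ)^[3] y₁ = x → (Gmap ρ σ)^[3] y₂ = x → y₁ = y₂) ∧
    Real.exp 3 / (δ * (Real.exp 3 - 1) + 1) - 1 < 1 ∧
    (∀ x ∈ Qset ρ σ ε, ∀ y ∈ Qset ρ σ ε, dist x y < δ →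
      ∀ i : Fin 4 → Fin 3, ∀ x' ∈ Pelem ρ σ ε i, ∀ y' ∈ Pelem ρ σ ε i,
        (Gmap ρ σ)^[3] x' = x → (Gmap ρ σ)^[3] y' = y →
          dist x' y' < (1 + (Real.exp 3 / (δ * (Real.exp 3 - 1) + 1) - 1)) * δ) :=
  partition_into_injectivity_domains_general ρ σ ε hρ0 hρ hε0 δ hδ1 hδ2
end
end

section
/- Let (Q,d) be a compact metric space, α ∈ (0,1], δ > 0, k > 0 and λ̂ ∈ (0,1), and let m > 0 be a constant such that every function on Q that is (C,α)-Hölder in balls of radius δ is globally (m·C,α)-Hölder. Then for all φ, ψ in the cone C_{λ̂k,δ} one has Θ_k(φ,ψ) ≤ 2·log((1+λ̂)/(1−λ̂)) + 2·log(1 + m·λ̂·k·(diam Q)^α), where Θ_k is the projective metric of the cone C_{k,δ}; in particular C_{λ̂k,δ} has finite Θ_k-diameter. -/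
open Metric Set
open scoped ENNReal

noncomputable section

/-- The smallest constant `C ≥ 0` such that `|φ(x) − φ(y)| ≤ C·d(x,y)^α` whenever
`d(x,y) ≤ δ`, i.e. `|φ|_{α,δ}`. -/
def holderConstBall {Q : Type*} [MetricSpace Q] (α δ : ℝ) (φ : Q → ℝ) : ℝ :=
  sInf {C : ℝ | 0 ≤ C ∧ ∀ x y : Q, dist x y ≤ δ → |φ x - φ y| ≤ C * dist x y ^ α}

/-- Membership in the cone `C_{k,δ}` of locally Hölder observables: `φ` is continuous,
everywhere positive, and `|φ|_{α,δ} ≤ k · inf φ` (expressed by the defining Hölder bound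
with constant `k · inf φ`). -/
def memCone {Q : Type*} [MetricSpace Q] (α δ k : ℝ) (φ : Q → ℝ) : Prop :=
  Continuous φ ∧ (∀ x, 0 < φ x) ∧
    ∀ x y : Q, dist x y ≤ δ → |φ x - φ y| ≤ k * (⨅ z, φ z) * dist x y ^ α

/-- The projective metric `Θ_k` of the cone `C_{k,δ}`, with values in `[0,+∞]`:
`Θ_k(φ,ψ) = log (B/A)` with `A = sup{t > 0 : ψ − tφ ∈ C_{k,δ}}`,
`B = inf{s > 0 : sφ − ψ ∈ C_{k,δ}}` (equal to `+∞` when `A = 0` or `B = +∞`). -/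
def thetaCone {Q : Type*} [MetricSpace Q] (α δ k : ℝ) (φ ψ : Q → ℝ) : ℝ≥0∞ :=
  ⨅ (s : ℝ) (_ : 0 < s) (_ : memCone α δ k (fun x => s * φ x - ψ x))
    (t : ℝ) (_ : 0 < t) (_ : memCone α δ k (fun x => ψ x - t * φ x)),
    ENNReal.ofReal (Real.log (s / t))

/-! Writing `a = inf φ`, `b = inf ψ` and `E = 1 + m·λ̂·k·(diam Q)^α`, the global Hölder bound gives
`φ ≤ a·E` and `ψ ≤ b·E`. For `s = (1+λ̂)·E·b / ((1−λ̂)·a)` and `t = (1−λ̂)·b / ((1+λ̂)·E·a)` both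
`sφ − ψ` and `ψ − tφ` stay above `λ̂` times the sum of the infima of their two terms, and a difference
of two members of `C_{λ̂k,δ}` with this property lies in `C_{k,δ}`, because the Hölder constants
of its two terms add up to `k` times that lower bound. Hence
`Θ_k(φ,ψ) ≤ log (s/t) = 2·log ((1+λ̂)/(1−λ̂)·E)`. -/

section Cone

variable {Q : Type*} [MetricSpace Q] {α δ c k : ℝ} {φ ψ f g : Q → ℝ}

theorem Continuous.iInf_pos [CompactSpace Q] [Nonempty Q] (hc : Continuous f)
    (hpos : ∀ x, 0 < f x) : 0 < ⨅ z, f z := by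
  obtain ⟨a, ha, hle⟩ := isCompact_univ.exists_forall_le' hc.continuousOn fun x _ => hpos x
  exact ha.trans_le (le_ciInf fun x => hle x (mem_univ x))

theorem le_iInf_add_mul_diam_rpow [BoundedSpace Q] {C : ℝ} (hα : 0 ≤ α) (hC : 0 ≤ C)
    (hf : ∀ x y : Q, |f x - f y| ≤ C * dist x y ^ α) (x : Q) :
    f x ≤ (⨅ z, f z) + C * diam (univ : Set Q) ^ α := by
  have : Nonempty Q := ⟨x⟩
  suffices h : f x - C * diam (univ : Set Q) ^ α ≤ ⨅ z, f z by linarith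
  refine le_ciInf fun y => ?_
  have hdist : dist x y ^ α ≤ diam (univ : Set Q) ^ α :=
    Real.rpow_le_rpow dist_nonneg
      (dist_le_diam_of_mem (Bornology.isBounded_univ.mpr ‹_›) (mem_univ x) (mem_univ y)) hα
  have hxy := (le_abs_self _).trans (hf x y)
  have := mul_le_mul_of_nonneg_left hdist hC
  linarith

theorem memCone.bddBelow (hφ : memCone α δ c φ) : BddBelow (range φ) :=
  ⟨0, by rintro _ ⟨z, rfl⟩; exact (hφ.2.1 z).le⟩

theorem memCone.iInf_le (hφ : memCone α δ c φ) (z : Q) : ⨅ z, φ z ≤ φ z :=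
  ciInf_le hφ.bddBelow z

theorem memCone.le_iInf_mul [CompactSpace Q] {m : ℝ} (hα : 0 ≤ α) (hc : 0 ≤ c) (hm : 0 ≤ m)
    (hglobal : ∀ C : ℝ, 0 ≤ C → ∀ φ : Q → ℝ,
      (∀ x y : Q, dist x y ≤ δ → |φ x - φ y| ≤ C * dist x y ^ α) →
      ∀ x y : Q, |φ x - φ y| ≤ m * C * dist x y ^ α)
    (hφ : memCone α δ c φ) (x : Q) :
    φ x ≤ (⨅ z, φ z) * (1 + m * c * diam (univ : Set Q) ^ α) := by
  have : Nonempty Q := ⟨x⟩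
  have hinf : 0 ≤ ⨅ z, φ z := hφ.1.iInf_pos hφ.2.1 |>.le
  have hC : 0 ≤ m * (c * ⨅ z, φ z) := by positivity
  have h := le_iInf_add_mul_diam_rpow hα hC (hglobal _ (by positivity) φ hφ.2.2) x
  linarith

theorem memCone.const_mul {s : ℝ} (hs : 0 < s) (hφ : memCone α δ c φ) :
    memCone α δ c (fun z => s * φ z) := by
  obtain ⟨hcont, hpos, hhol⟩ := hφ
  refine ⟨by fun_prop, fun x => mul_pos hs (hpos x), fun x y hxy => ?_⟩
  calc |s * φ x - s * φ y| = s * |φ x - φ y| := by rw [← mul_sub, abs_mul, abs_of_pos hs]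
    _ ≤ s * (c * (⨅ z, φ z) * dist x y ^ α) := by gcongr; exact hhol x y hxy
    _ = c * (⨅ z, s * φ z) * dist x y ^ α := by rw [← Real.mul_iInf_of_nonneg hs.le]; ring

theorem memCone_of_forall_le [Nonempty Q] {L : ℝ} (hk : 0 ≤ k) (hcont : Continuous f)
    (hL : 0 < L) (hle : ∀ z, L ≤ f z)
    (hhol : ∀ x y : Q, dist x y ≤ δ → |f x - f y| ≤ k * L * dist x y ^ α) :
    memCone α δ k f := by
  refine ⟨hcont, fun x => hL.trans_le (hle x), fun x y hxy => (hhol x y hxy).trans ?_⟩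
  gcongr
  exact le_ciInf hle

theorem memCone_sub_of_le [CompactSpace Q] [Nonempty Q] {lam : ℝ} (hk : 0 ≤ k) (hlam : 0 < lam)
    (hf : memCone α δ (lam * k) f) (hg : memCone α δ (lam * k) g)
    (hle : ∀ z, lam * ((⨅ z, f z) + ⨅ z, g z) ≤ f z - g z) :
    memCone α δ k (fun z => f z - g z) := by
  have hfinf := hf.1.iInf_pos hf.2.1
  have hginf := hg.1.iInf_pos hg.2.1
  refine memCone_of_forall_le hk (hf.1.sub hg.1) (by positivity) hle fun x y hxy => ?_
  calc |(f x - g x) - (f y - g y)| = |(f x - f y) - (g x - g y)| := by ring_nf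
    _ ≤ |f x - f y| + |g x - g y| := abs_sub _ _
    _ ≤ lam * k * (⨅ z, f z) * dist x y ^ α + lam * k * (⨅ z, g z) * dist x y ^ α :=
        add_le_add (hf.2.2 x y hxy) (hg.2.2 x y hxy)
    _ = k * (lam * ((⨅ z, f z) + ⨅ z, g z)) * dist x y ^ α := by ring

theorem thetaCone_le_log_div {s t : ℝ} (hs : 0 < s) (ht : 0 < t)
    (hs_sub : memCone α δ k (fun x => s * φ x - ψ x))
    (ht_sub : memCone α δ k (fun x => ψ x - t * φ x)) :
    thetaCone α δ k φ ψ ≤ ENNReal.ofReal (Real.log (s / t)) :=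
  iInf_le_of_le s <| iInf_le_of_le hs <| iInf_le_of_le hs_sub <|
    iInf_le_of_le t <| iInf_le_of_le ht <| iInf_le _ ht_sub

theorem thetaCone_le_of_le_iInf_mul [CompactSpace Q] [Nonempty Q] {lam E : ℝ} (hk : 0 ≤ k)
    (hlam0 : 0 < lam) (hlam1 : lam < 1) (hE : 1 ≤ E)
    (hφ : memCone α δ (lam * k) φ) (hψ : memCone α δ (lam * k) ψ)
    (hφE : ∀ z, φ z ≤ (⨅ z, φ z) * E) (hψE : ∀ z, ψ z ≤ (⨅ z, ψ z) * E) :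
    thetaCone α δ k φ ψ ≤
      ENNReal.ofReal (2 * Real.log ((1 + lam) / (1 - lam)) + 2 * Real.log E) := by
  set a := ⨅ z, φ z
  set b := ⨅ z, ψ z
  have ha : 0 < a := hφ.1.iInf_pos hφ.2.1
  have hb : 0 < b := hψ.1.iInf_pos hψ.2.1
  have h1m : 0 < 1 - lam := by linarith
  set s := (1 + lam) * E * b / ((1 - lam) * a) with hs_def
  set t := (1 - lam) * b / ((1 + lam) * E * a) with ht_def
  have hs : 0 < s := by positivity
  have ht : 0 < t := by positivity
  have hsa : (1 - lam) * (s * a) = (1 + lam) * E * b := by rw [hs_def]; field_simp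
  have hta : (1 + lam) * E * (t * a) = (1 - lam) * b := by rw [ht_def]; field_simp
  have hsφ : ⨅ z, s * φ z = s * a := (Real.mul_iInf_of_nonneg hs.le _).symm
  have htφ : ⨅ z, t * φ z = t * a := (Real.mul_iInf_of_nonneg ht.le _).symm
  have hs_sub : memCone α δ k (fun z => s * φ z - ψ z) := by
    refine memCone_sub_of_le hk hlam0 (hφ.const_mul hs) hψ fun z => ?_
    rw [hsφ]
    calc lam * (s * a + b) ≤ s * a - E * b := by
          linarith [mul_nonneg (mul_nonneg hb.le hlam0.le) (sub_nonneg.mpr hE)]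
      _ ≤ s * φ z - ψ z := by
          linarith [mul_le_mul_of_nonneg_left (hφ.iInf_le z) hs.le, hψE z]
  have ht_sub : memCone α δ k (fun z => ψ z - t * φ z) := by
    refine memCone_sub_of_le hk hlam0 hψ (hφ.const_mul ht) fun z => ?_
    rw [htφ]
    calc lam * (b + t * a) ≤ b - t * a * E := by
          linarith [mul_nonneg (mul_nonneg (mul_pos ht ha).le hlam0.le) (sub_nonneg.mpr hE)]
      _ ≤ ψ z - t * φ z := by
          linarith [mul_le_mul_of_nonneg_left (hφE z) ht.le, hψ.iInf_le z]
  have hst : s / t = ((1 + lam) / (1 - lam) * E) ^ 2 := by rw [hs_def, ht_def]; field_simp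
  refine (thetaCone_le_log_div hs ht hs_sub ht_sub).trans_eq ?_
  rw [hst, Real.log_pow, Real.log_mul (by positivity) (by positivity)]
  push_cast
  ring_nf

end Cone

theorem smaller_cone_finite_diameter_general {Q : Type*} [MetricSpace Q] [CompactSpace Q] [Nonempty Q]
    (α δ k m lamhat : ℝ) (hα : 0 < α) (hk : 0 < k) (hm : 0 < m)
    (hlam0 : 0 < lamhat) (hlam1 : lamhat < 1)
    (hmprop : ∀ C : ℝ, 0 ≤ C → ∀ φ : Q → ℝ,
      (∀ x y : Q, dist x y ≤ δ → |φ x - φ y| ≤ C * dist x y ^ α) →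
      ∀ x y : Q, |φ x - φ y| ≤ m * C * dist x y ^ α)
    (φ ψ : Q → ℝ) (hφ : memCone α δ (lamhat * k) φ) (hψ : memCone α δ (lamhat * k) ψ) :
    thetaCone α δ k φ ψ ≤
      ENNReal.ofReal (2 * Real.log ((1 + lamhat) / (1 - lamhat)) +
        2 * Real.log (1 + m * lamhat * k * diam (univ : Set Q) ^ α)) := by
  have hc : 0 ≤ lamhat * k := by positivity
  have hE : 1 ≤ 1 + m * (lamhat * k) * diam (univ : Set Q) ^ α := by
    have : 0 ≤ m * (lamhat * k) * diam (univ : Set Q) ^ α := by positivity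
    linarith
  have h := thetaCone_le_of_le_iInf_mul hk.le hlam0 hlam1 hE hφ hψ
    (hφ.le_iInf_mul hα.le hc hm.le hmprop) (hψ.le_iInf_mul hα.le hc hm.le hmprop)
  simpa only [mul_assoc] using h

/-- For `φ, ψ` in the smaller cone `C_{λ̂k,δ}` one has
`Θ_k(φ,ψ) ≤ 2·log((1+λ̂)/(1−λ̂)) + 2·log(1 + m·λ̂·k·(diam Q)^α)`; in particular
`C_{λ̂k,δ}` has finite `Θ_k`-diameter. -/
theorem smaller_cone_finite_diameter {Q : Type*} [MetricSpace Q] [CompactSpace Q] [Nonempty Q]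
    (α δ k m lamhat : ℝ) (hα : 0 < α) (hα1 : α ≤ 1) (hδ : 0 < δ) (hk : 0 < k) (hm : 0 < m)
    (hlam0 : 0 < lamhat) (hlam1 : lamhat < 1)
    (hmprop : ∀ C : ℝ, 0 ≤ C → ∀ φ : Q → ℝ,
      (∀ x y : Q, dist x y ≤ δ → |φ x - φ y| ≤ C * dist x y ^ α) →
      ∀ x y : Q, |φ x - φ y| ≤ m * C * dist x y ^ α)
    (φ ψ : Q → ℝ) (hφ : memCone α δ (lamhat * k) φ) (hψ : memCone α δ (lamhat * k) ψ) :
    thetaCone α δ k φ ψ ≤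
      ENNReal.ofReal (2 * Real.log ((1 + lamhat) / (1 - lamhat)) +
        2 * Real.log (1 + m * lamhat * k * diam (univ : Set Q) ^ α)) :=
  smaller_cone_finite_diameter_general α δ k m lamhat hα hk hm hlam0 hlam1 hmprop φ ψ hφ hψ
end
end

section
/- Let G be the projection map on Q = R₁ ∪ R₂ ∪ R₃, fix δ with 1/2 ≤ δ ≤ 3/4 − 2ρ, and let φ⋆ : Q → ℝ be an α-Hölder potential satisfying condition (★). For k > 0 sufficiently large, letting λ̂ ∈ (0,1) be such that L³(C_{k,δ}) ⊆ C_{λ̂k,δ} and Δ := diam_{Θ_k}(C_{λ̂k,δ}) > 0, the operator L³ is a strict contraction of the cone C_{k,δ} in its projective metric: Θ_k(L³φ, L³ψ) ≤ (1 − e^{−Δ})·Θ_k(φ,ψ) for all φ, ψ ∈ C_{k,δ}. -/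
open Metric Set MeasureTheory Filter
open scoped ENNReal Classical

noncomputable section

/-- The projective metric `Θ_k` of the cone `C_{k,δ}` of observables on `Q`, with values in
`[0,+∞]`: `Θ_k(φ,ψ) = log (B/A)` with `A = sup{t > 0 : ψ − tφ ∈ C_{k,δ}}` and
`B = inf{s > 0 : sφ − ψ ∈ C_{k,δ}}` (equal to `+∞` when `A = 0` or `B = +∞`). -/
def thetaQ (ρ σ ε α δ k : ℝ) (φ ψ : E3 → ℝ) : ℝ≥0∞ :=
  ⨅ (s : ℝ) (_ : 0 < s) (_ : memConeQ ρ σ ε α δ k (fun x => s * φ x - ψ x))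
    (t : ℝ) (_ : 0 < t) (_ : memConeQ ρ σ ε α δ k (fun x => ψ x - t * φ x)),
    ENNReal.ofReal (Real.log (s / t))


/-!
`L³` is linear and maps `C_{k,δ}` into `C_{λ̂k,δ}`, whose `Θ_k`-diameter is `Δ`. If
`sφ − ψ` and `ψ − tφ` lie in `C_{k,δ}`, their images `A`, `B` lie in `C_{λ̂k,δ}`, so
`vA − B` and `B − uA` lie in `C_{k,δ}` for some `u < v` with `log (v/u)` as close to `Δ` as we
like. Recombining these, `s'L³φ − L³ψ` and `L³ψ − t'L³φ` lie in `C_{k,δ}` with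
`s'/t' = (1 + vx)(1 + u) / ((1 + ux)(1 + v))` for `x = s/t`, and
`log (s'/t') ≤ (1 − u/v) log x` for `x ≥ 1` by comparing derivatives in `x`.
-/

theorem log_ratio_le {u v x : ℝ} (hu : 0 < u) (huv : u ≤ v) (hx : 1 ≤ x) :
    Real.log ((1 + v * x) * (1 + u) / ((1 + u * x) * (1 + v))) ≤ (1 - u / v) * Real.log x := by
  have hv : 0 < v := hu.trans_le huv
  set F : ℝ → ℝ := fun y =>
    (1 - u / v) * Real.log y - Real.log (1 + v * y) + Real.log (1 + u * y)
  have hF : ∀ y ∈ Ici (1 : ℝ),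
      HasDerivAt F ((v - u) / (v * y) - (v - u) / ((1 + v * y) * (1 + u * y))) y := by
    intro y hy1
    have hy : 0 < y := one_pos.trans_le hy1
    have hvy : 0 < 1 + v * y := by positivity
    have huy : 0 < 1 + u * y := by positivity
    have hlin : ∀ c : ℝ, HasDerivAt (fun y => 1 + c * y) c y := fun c => by
      simpa using ((hasDerivAt_id y).const_mul c).const_add 1
    refine ((((Real.hasDerivAt_log hy.ne').const_mul (1 - u / v)).sub
      ((hlin v).log hvy.ne')).add ((hlin u).log huy.ne')).congr_deriv ?_
    field_simp
    ring
  have hmono : MonotoneOn F (Ici 1) := by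
    refine monotoneOn_of_hasDerivWithinAt_nonneg (convex_Ici 1)
      (fun y hy => (hF y hy).continuousAt.continuousWithinAt)
      (fun y hy => (hF y (interior_subset hy)).hasDerivWithinAt) fun y hy => ?_
    have hy1 : 1 < y := by rwa [interior_Ici] at hy
    have hy0 : 0 < y := one_pos.trans hy1
    rw [sub_nonneg]
    apply div_le_div_of_nonneg_left (by linarith) (by positivity)
    nlinarith [mul_pos hu hy0, mul_pos hv hy0]
  have h1x := hmono self_mem_Ici hx hx
  have hvx : 0 < 1 + v * x := by positivity
  have hux : 0 < 1 + u * x := by positivity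
  simp only [F, Real.log_one, mul_zero, mul_one, zero_sub] at h1x
  rw [Real.log_div (by positivity) (by positivity), Real.log_mul hvx.ne' (by positivity),
    Real.log_mul hux.ne' (by positivity)]
  linarith

section ProjectiveMetric

variable {V : Type*} [AddCommGroup V] [Module ℝ V]

def projMetric (C : Set V) (φ ψ : V) : ℝ≥0∞ :=
  ⨅ (s : ℝ) (_ : 0 < s) (_ : s • φ - ψ ∈ C) (t : ℝ) (_ : 0 < t) (_ : ψ - t • φ ∈ C),
    ENNReal.ofReal (Real.log (s / t))

theorem projMetric_le {C : Set V} {φ ψ : V} {s t : ℝ} (hs : 0 < s) (hsC : s • φ - ψ ∈ C)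
    (ht : 0 < t) (htC : ψ - t • φ ∈ C) :
    projMetric C φ ψ ≤ ENNReal.ofReal (Real.log (s / t)) :=
  iInf₂_le_of_le s hs <| iInf_le_of_le hsC <| iInf₂_le_of_le t ht <| iInf_le _ htC

theorem exists_of_projMetric_lt {C : Set V} {φ ψ : V} {r : ℝ}
    (h : projMetric C φ ψ < ENNReal.ofReal r) :
    ∃ s t : ℝ, 0 < s ∧ s • φ - ψ ∈ C ∧ 0 < t ∧ ψ - t • φ ∈ C ∧ Real.log (s / t) < r := by
  simp only [projMetric, iInf_lt_iff] at h
  obtain ⟨s, hs, hsC, t, ht, htC, hlt⟩ := h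
  exact ⟨s, t, hs, hsC, ht, htC, (ENNReal.ofReal_lt_ofReal_iff'.mp hlt).1⟩

theorem lt_of_sub_mem {C : Set V} (ℓ : V →ₗ[ℝ] ℝ) (hℓ : ∀ f ∈ C, 0 < ℓ f) {φ ψ : V}
    (hφ : 0 < ℓ φ) {s t : ℝ} (hsC : s • φ - ψ ∈ C) (htC : ψ - t • φ ∈ C) : t < s := by
  have h₁ := hℓ _ hsC
  have h₂ := hℓ _ htC
  simp only [map_sub, map_smul, smul_eq_mul] at h₁ h₂
  nlinarith

theorem projMetric_le_of_sub_mem {C : Set V} (hC : ∀ c : ℝ, 0 < c → ∀ f ∈ C, c • f ∈ C)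
    {Φ Ψ : V} {s t u v : ℝ} (ht : 0 < t) (hts : t ≤ s) (hu : 0 < u) (huv : u ≤ v)
    (hvC : v • (s • Φ - Ψ) - (Ψ - t • Φ) ∈ C) (huC : (Ψ - t • Φ) - u • (s • Φ - Ψ) ∈ C) :
    projMetric C Φ Ψ ≤ ENNReal.ofReal ((1 - u / v) * Real.log (s / t)) := by
  have hv : 0 < v := hu.trans_le huv
  have hs : 0 < s := ht.trans_le hts
  have hs'C : ((v * s + t) / (1 + v)) • Φ - Ψ ∈ C := by
    convert hC (1 + v)⁻¹ (by positivity) _ hvC using 1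
    match_scalars <;> field_simp <;> ring
  have ht'C : Ψ - ((t + u * s) / (1 + u)) • Φ ∈ C := by
    convert hC (1 + u)⁻¹ (by positivity) _ huC using 1
    match_scalars <;> field_simp <;> ring
  calc projMetric C Φ Ψ
      ≤ ENNReal.ofReal (Real.log ((v * s + t) / (1 + v) / ((t + u * s) / (1 + u)))) :=
        projMetric_le (by positivity) hs'C (by positivity) ht'C
    _ = ENNReal.ofReal
          (Real.log ((1 + v * (s / t)) * (1 + u) / ((1 + u * (s / t)) * (1 + v)))) := by
        congr 2
        field_simp
        ring
    _ ≤ ENNReal.ofReal ((1 - u / v) * Real.log (s / t)) :=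
        ENNReal.ofReal_le_ofReal (log_ratio_le hu huv ((one_le_div ht).2 hts))

theorem projMetric_map_le {C C' : Set V} (ℓ : V →ₗ[ℝ] ℝ) (hℓC : ∀ f ∈ C, 0 < ℓ f)
    (hℓC' : ∀ f ∈ C', 0 < ℓ f) (hC : ∀ c : ℝ, 0 < c → ∀ f ∈ C, c • f ∈ C)
    (T : V →ₗ[ℝ] V) (hT : ∀ f ∈ C, T f ∈ C') {Δ : ℝ≥0∞}
    (hΔ : ∀ f ∈ C', ∀ g ∈ C', projMetric C f g ≤ Δ) (hΔ0 : 0 < Δ) (hΔtop : Δ ≠ ⊤)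
    {φ : V} (hφ : φ ∈ C) (ψ : V) :
    projMetric C (T φ) (T ψ) ≤ ENNReal.ofReal (1 - Real.exp (-Δ.toReal)) * projMetric C φ ψ := by
  have hc : 0 < 1 - Real.exp (-Δ.toReal) := by
    simpa using ENNReal.toReal_pos hΔ0.ne' hΔtop
  simp only [projMetric,
    ENNReal.mul_iInf_of_ne (ENNReal.ofReal_pos.2 hc).ne' ENNReal.ofReal_ne_top]
  refine le_iInf₂ fun s hs => le_iInf fun hsC => le_iInf₂ fun t ht => le_iInf fun htC => ?_
  rw [← ENNReal.ofReal_mul hc.le]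
  have hts : t ≤ s := (lt_of_sub_mem ℓ hℓC (hℓC φ hφ) hsC htC).le
  have hA : s • T φ - T ψ ∈ C' := by simpa using hT _ hsC
  have hB : T ψ - t • T φ ∈ C' := by simpa using hT _ htC
  have hbound : ∀ r > Δ.toReal, projMetric C (T φ) (T ψ) ≤
      ENNReal.ofReal ((1 - Real.exp (-r)) * Real.log (s / t)) := by
    intro r hr
    obtain ⟨v, u, hv, hvC, hu, huC, hlog⟩ := exists_of_projMetric_lt
      ((hΔ _ hA _ hB).trans_lt ((ENNReal.lt_ofReal_iff_toReal_lt hΔtop).2 hr))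
    have huv : u < v := lt_of_sub_mem ℓ hℓC (hℓC' _ hA) hvC huC
    have hexp : Real.exp (-r) < u / v := by
      rw [← Real.lt_log_iff_exp_lt (by positivity), ← inv_div, Real.log_inv]
      linarith
    refine (projMetric_le_of_sub_mem hC ht hts hu huv.le hvC huC).trans
      (ENNReal.ofReal_le_ofReal (mul_le_mul_of_nonneg_right (by linarith)
        (Real.log_nonneg ((one_le_div ht).2 hts))))
  have hcont : Continuous fun r => ENNReal.ofReal ((1 - Real.exp (-r)) * Real.log (s / t)) :=
    ENNReal.continuous_ofReal.comp (by fun_prop)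
  exact ge_of_tendsto ((hcont.tendsto _).mono_left nhdsWithin_le_nhds)
    (eventually_nhdsWithin_of_forall (s := Ioi Δ.toReal) hbound)

end ProjectiveMetric

theorem thetaQ_eq_projMetric (ρ σ ε α δ k : ℝ) :
    thetaQ ρ σ ε α δ k = projMetric {f | memConeQ ρ σ ε α δ k f} := rfl

theorem g0_injective : Function.Injective g0 := by
  intro a b h
  simp only [g0, one_div, inv_inj, add_right_inj] at h
  rwa [div_eq_mul_inv, div_eq_mul_inv, mul_right_inj' (Real.exp_pos 1).ne', inv_inj] at h

section Projection

variable {ρ σ : ℝ}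

theorem Gmap_injOn_R2 (hρ : ρ ≠ 0) (hσ : σ ≠ 0) : InjOn (Gmap ρ σ) (R2 ρ σ) := by
  intro p hp q hq h
  simp only [Gmap, if_pos hp, if_pos hq] at h
  have h0 := congrArg (· 0) h
  have h1 := congrArg (· 1) h
  simp only [Matrix.cons_val_zero, Matrix.cons_val_one, div_left_inj' hρ, div_left_inj' hσ,
    sub_right_inj] at h0 h1
  ext i
  fin_cases i
  exacts [h0, h1, hp.2.2.trans hq.2.2.symm]

theorem Gmap_injOn_compl_R2 (hρ : ρ ≠ 0) (c : ℝ) :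
    InjOn (Gmap ρ σ) ((R2 ρ σ)ᶜ ∩ {p | p 2 = c}) := by
  intro p hp q hq h
  simp only [Gmap, if_neg hp.1, if_neg hq.1] at h
  have h0 := congrArg (· 0) h
  have h1 := congrArg (· 1) h
  simp only [Matrix.cons_val_zero, Matrix.cons_val_one, div_left_inj' hρ] at h0 h1
  ext i
  fin_cases i
  exacts [h0, g0_injective h1, hp.2.trans hq.2.symm]

variable (ε : ℝ)

theorem preQ_finite (hρ : ρ ≠ 0) (hσ : σ ≠ 0) (x : E3) : (preQ ρ σ ε x).Finite := by
  have hfin : ∀ s, InjOn (Gmap ρ σ) s → (preQ ρ σ ε x ∩ s).Finite := fun s hs =>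
    ((finite_singleton x).subset (by rintro _ ⟨p, hp, rfl⟩; exact hp.1.2)).of_finite_image
      (hs.mono inter_subset_right)
  refine ((hfin _ (Gmap_injOn_R2 hρ hσ)).union ((hfin _ (Gmap_injOn_compl_R2 hρ 0)).union
    (hfin _ (Gmap_injOn_compl_R2 hρ (5 / 6))))).subset ?_
  rintro p hpx
  by_cases hp : p ∈ R2 ρ σ
  · exact Or.inl ⟨hpx, hp⟩
  rcases hpx.1 with (h1 | h2) | h3
  · exact Or.inr (Or.inl ⟨hpx, hp, h1.2.2⟩)
  · exact absurd h2 hp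
  · exact Or.inr (Or.inr ⟨hpx, hp, h3.2.2⟩)

def transferLinearMap (hρ : ρ ≠ 0) (hσ : σ ≠ 0) (φs : E3 → ℝ) : Module.End ℝ (E3 → ℝ) where
  toFun := transferOp ρ σ ε φs
  map_add' f g := by
    funext x
    have := (preQ_finite ε hρ hσ x).to_subtype
    simp only [transferOp, Pi.add_apply, mul_add]
    exact Summable.of_finite.tsum_add Summable.of_finite
  map_smul' c f := by
    funext x
    simp only [transferOp, Pi.smul_apply, smul_eq_mul, RingHom.id_apply, mul_left_comm _ c,
      tsum_mul_left]

theorem coe_transferLinearMap (hρ : ρ ≠ 0) (hσ : σ ≠ 0) (φs : E3 → ℝ) :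
    ⇑(transferLinearMap ε hρ hσ φs) = transferOp ρ σ ε φs := rfl

theorem zero_mem_Qset (hρ : 0 ≤ ρ) : (0 : E3) ∈ Qset ρ σ ε :=
  Or.inl (Or.inl ⟨by simp [hρ], by simp, by simp⟩)

theorem infQ_smul {c : ℝ} (hc : 0 ≤ c) (χ : E3 → ℝ) :
    infQ ρ σ ε (c • χ) = c * infQ ρ σ ε χ := by
  rw [infQ, infQ, ← smul_eq_mul, ← Real.sInf_smul_of_nonneg hc, ← image_smul, image_image]
  rfl

theorem memConeQ_smul {α δ k c : ℝ} (hc : 0 < c) {χ : E3 → ℝ}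
    (h : memConeQ ρ σ ε α δ k χ) : memConeQ ρ σ ε α δ k (c • χ) := by
  obtain ⟨hcont, hpos, hhol⟩ := h
  refine ⟨hcont.const_smul c, fun x hx => mul_pos hc (hpos x hx), fun x hx y hy hxy => ?_⟩
  rw [infQ_smul ε hc.le]
  calc |(c • χ) x - (c • χ) y| = c * |χ x - χ y| := by
        simp only [Pi.smul_apply, smul_eq_mul, ← mul_sub, abs_mul, abs_of_pos hc]
    _ ≤ c * (k * infQ ρ σ ε χ * dist x y ^ α) := by gcongr; exact hhol x hx y hy hxy
    _ = k * (c * infQ ρ σ ε χ) * dist x y ^ α := by ring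

end Projection

theorem transfer_operator_cone_contraction_general
    (ρ σ ε : ℝ) (hρ0 : 0 < ρ) (hσ0 : 0 < σ)
    (α : ℝ) (δ : ℝ) (φs : E3 → ℝ) :
    ∃ k₀ : ℝ, 0 < k₀ ∧ ∀ k : ℝ, k₀ ≤ k →
      ∀ lamhat : ℝ, 0 < lamhat → lamhat < 1 →
        (∀ φ : E3 → ℝ, memConeQ ρ σ ε α δ k φ →
          memConeQ ρ σ ε α δ (lamhat * k) ((transferOp ρ σ ε φs)^[3] φ)) →
        ∀ Δ : ℝ≥0∞,
          Δ = (⨆ (φ : E3 → ℝ) (_ : memConeQ ρ σ ε α δ (lamhat * k) φ)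
                (ψ : E3 → ℝ) (_ : memConeQ ρ σ ε α δ (lamhat * k) ψ),
                thetaQ ρ σ ε α δ k φ ψ) →
          0 < Δ → Δ ≠ ⊤ →
          ∀ φ ψ : E3 → ℝ, memConeQ ρ σ ε α δ k φ → memConeQ ρ σ ε α δ k ψ →
            thetaQ ρ σ ε α δ k ((transferOp ρ σ ε φs)^[3] φ) ((transferOp ρ σ ε φs)^[3] ψ) ≤
              ENNReal.ofReal (1 - Real.exp (-Δ.toReal)) * thetaQ ρ σ ε α δ k φ ψ := by
  refine ⟨1, one_pos, fun k _ lamhat _ _ hmap Δ hΔ hΔ0 hΔtop φ ψ hφ _ => ?_⟩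
  have hpos : ∀ κ, ∀ f, memConeQ ρ σ ε α δ κ f → 0 < f 0 := fun _ _ hf =>
    hf.2.1 0 (zero_mem_Qset ε hρ0.le)
  have hdiam : ∀ f, memConeQ ρ σ ε α δ (lamhat * k) f →
      ∀ g, memConeQ ρ σ ε α δ (lamhat * k) g → thetaQ ρ σ ε α δ k f g ≤ Δ :=
    fun f hf g hg => hΔ ▸ le_iSup₂_of_le f hf (le_iSup₂_of_le g hg le_rfl)
  have hmap' : ∀ f, memConeQ ρ σ ε α δ k f →
      memConeQ ρ σ ε α δ (lamhat * k) ((transferLinearMap ε hρ0.ne' hσ0.ne' φs ^ 3) f) := by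
    simpa only [Module.End.coe_pow, coe_transferLinearMap] using hmap
  have := projMetric_map_le (C := {f | memConeQ ρ σ ε α δ k f})
    (C' := {f | memConeQ ρ σ ε α δ (lamhat * k) f}) (LinearMap.proj 0) (hpos k)
    (hpos (lamhat * k)) (fun c hc f hf => memConeQ_smul ε hc hf) _ hmap' hdiam hΔ0 hΔtop hφ ψ
  simpa only [thetaQ_eq_projMetric, Module.End.coe_pow, coe_transferLinearMap] using this

/-- **contraction on the cone.** For `k > 0` sufficiently large, if
`λ̂ ∈ (0,1)` is such that `L³(C_{k,δ}) ⊆ C_{λ̂k,δ}` and `Δ := diam_{Θ_k}(C_{λ̂k,δ}) > 0`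
(a finite quantity), then `Θ_k(L³φ, L³ψ) ≤ (1 − e^{−Δ})·Θ_k(φ,ψ)` for all `φ, ψ ∈ C_{k,δ}`. -/
theorem transfer_operator_cone_contraction
    (ρ σ ε : ℝ) (hρ0 : 0 < ρ) (hρ : ρ < 1 / 3) (hσ0 : 0 < σ) (hσ : σ < 1 / 3)
    (hε0 : 0 < ε) (hε : ε < 1 / 100)
    (α : ℝ) (hα : 0 < α) (hα1 : α ≤ 1)
    (δ : ℝ) (hδ1 : 1 / 2 ≤ δ) (hδ2 : δ ≤ 3 / 4 - 2 * ρ)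
    (m : ℝ) (hm : 0 < m) (hmp : mProp ρ σ ε α δ m)
    (φs : E3 → ℝ)
    (hφs : ∃ C : ℝ, 0 ≤ C ∧ ∀ x ∈ Qset ρ σ ε, ∀ y ∈ Qset ρ σ ε,
      |φs x - φs y| ≤ C * dist x y ^ α)
    (hstar : starCond ρ σ ε α m φs) :
    ∃ k₀ : ℝ, 0 < k₀ ∧ ∀ k : ℝ, k₀ ≤ k →
      ∀ lamhat : ℝ, 0 < lamhat → lamhat < 1 →
        (∀ φ : E3 → ℝ, memConeQ ρ σ ε α δ k φ →
          memConeQ ρ σ ε α δ (lamhat * k) ((transferOp ρ σ ε φs)^[3] φ)) →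
        ∀ Δ : ℝ≥0∞,
          Δ = (⨆ (φ : E3 → ℝ) (_ : memConeQ ρ σ ε α δ (lamhat * k) φ)
                (ψ : E3 → ℝ) (_ : memConeQ ρ σ ε α δ (lamhat * k) ψ),
                thetaQ ρ σ ε α δ k φ ψ) →
          0 < Δ → Δ ≠ ⊤ →
          ∀ φ ψ : E3 → ℝ, memConeQ ρ σ ε α δ k φ → memConeQ ρ σ ε α δ k ψ →
            thetaQ ρ σ ε α δ k ((transferOp ρ σ ε φs)^[3] φ) ((transferOp ρ σ ε φs)^[3] ψ) ≤
              ENNReal.ofReal (1 - Real.exp (-Δ.toReal)) * thetaQ ρ σ ε α δ k φ ψ :=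
  transfer_operator_cone_contraction_general ρ σ ε hρ0 hσ0 α δ φs
end
end

section
/- Let (X,d) be a compact metric space with Borel σ-algebra B, T : X → X a Borel measurable map, and μ a T-invariant Borel probability measure. Assume μ has exponential decay of correlations for Hölder observables with a constant linear in the L¹-norm of the first factor: there exist τ ∈ (0,1) and, for each α-Hölder ψ : X → ℝ, a constant K(ψ) > 0 such that |∫(φ∘Tⁿ)·ψ dμ − ∫φ dμ·∫ψ dμ| ≤ K(ψ)·‖φ‖_{L¹(μ)}·τⁿ for all φ ∈ L¹(μ) and all n ≥ 1. Then μ is exact: every φ ∈ L¹(μ) that is measurable with respect to the tail σ-algebra B_∞ = ⋂_{n≥0} T^{−n}(B) is constant μ-almost everywhere. -/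
/-!
A tail-measurable `φ` factors as `g ∘ Tⁿ` for every `n`, and invariance gives `∫ g = ∫ φ` and
`‖g‖₁ = ‖φ‖₁`. The decay estimate applied to `g` therefore bounds the correlation of `φ` with a
Hölder `ψ` by `C τⁿ` for every `n`, so it vanishes. On a compact space Lipschitz functions are
Hölder, and thickened indicators of a closed set `F` are Lipschitz and decrease to `𝟙_F`; hence
`φ - ∫ φ` integrates to zero over every closed set, and so vanishes almost everywhere.
-/

open MeasureTheory Metric Set Filter Topology NNReal

abbrev tailMeasurableSpace {X : Type*} [m : MeasurableSpace X] (T : X → X) : MeasurableSpace X :=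
  ⨅ n : ℕ, m.comap T^[n]

lemma Measurable.exists_eq_measurable_comp_iterate {X Z : Type*} [MeasurableSpace X]
    [Nonempty Z] [MeasurableSpace Z] [StandardBorelSpace Z] {T : X → X} {φ : X → Z}
    (hφ : Measurable[tailMeasurableSpace T] φ) (n : ℕ) :
    ∃ g : X → Z, Measurable g ∧ φ = g ∘ T^[n] :=
  (hφ.mono (iInf_le _ n) le_rfl).exists_eq_measurable_comp

lemma MeasureTheory.MeasurePreserving.integral_comp_of_aestronglyMeasurable
    {α β : Type*} [MeasurableSpace α] [MeasurableSpace β] {μ : Measure α} {ν : Measure β}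
    {f : α → β} (hf : MeasurePreserving f μ ν) {g : β → ℝ} (hg : AEStronglyMeasurable g ν) :
    ∫ x, g (f x) ∂μ = ∫ y, g y ∂ν := by
  rw [← hf.map_eq] at hg ⊢
  exact (integral_map hf.measurable.aemeasurable hg).symm

lemma eq_zero_of_forall_abs_le_mul_pow {a C τ : ℝ} (hτ0 : 0 ≤ τ) (hτ1 : τ < 1)
    (h : ∀ n : ℕ, 1 ≤ n → |a| ≤ C * τ ^ n) : a = 0 := by
  have hlim : Tendsto (fun n : ℕ => C * τ ^ n) atTop (𝓝 0) := by
    simpa using (tendsto_pow_atTop_nhds_zero_of_lt_one hτ0 hτ1).const_mul C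
  exact abs_nonpos_iff.1 (ge_of_tendsto hlim (eventually_atTop.2 ⟨1, h⟩))

theorem integral_mul_eq_mul_integral_of_measurable_tail {X : Type*} [MeasurableSpace X]
    {μ : Measure X} {T : X → X} (hT : MeasurePreserving T μ μ) {φ ψ : X → ℝ}
    (hφ : Integrable φ μ) (htail : Measurable[tailMeasurableSpace T] φ) {K τ : ℝ}
    (hτ0 : 0 ≤ τ) (hτ1 : τ < 1)
    (hdec : ∀ f : X → ℝ, Integrable f μ → ∀ n : ℕ, 1 ≤ n →
      |(∫ x, f (T^[n] x) * ψ x ∂μ) - (∫ x, f x ∂μ) * ∫ x, ψ x ∂μ| ≤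
        K * (∫ x, |f x| ∂μ) * τ ^ n) :
    ∫ x, φ x * ψ x ∂μ = (∫ x, φ x ∂μ) * ∫ x, ψ x ∂μ := by
  refine sub_eq_zero.1 <|
    eq_zero_of_forall_abs_le_mul_pow (C := K * ∫ x, |φ x| ∂μ) hτ0 hτ1 fun n hn => ?_
  obtain ⟨g, hg, rfl⟩ := htail.exists_eq_measurable_comp_iterate n
  have hTn := hT.iterate n
  have hgi : Integrable g μ := (hTn.integrable_comp hg.aestronglyMeasurable).1 hφ
  simpa only [Function.comp_apply,
    hTn.integral_comp_of_aestronglyMeasurable hg.aestronglyMeasurable,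
    hTn.integral_comp_of_aestronglyMeasurable hg.abs.aestronglyMeasurable] using hdec g hgi n hn

lemma LipschitzWith.exists_abs_sub_le_mul_dist_rpow {X : Type*} [MetricSpace X] [BoundedSpace X]
    {K : ℝ≥0} {f : X → ℝ} (hf : LipschitzWith K f) {α : ℝ} (hα0 : 0 ≤ α) (hα1 : α ≤ 1) :
    ∃ C : ℝ, 0 ≤ C ∧ ∀ x y : X, |f x - f y| ≤ C * dist x y ^ α := by
  have hD : ∀ x y : X, edist x y ≤ (Metric.ediam (univ : Set X)).toNNReal := fun x y => by
    rw [ENNReal.coe_toNNReal (isBounded_iff_ediam_ne_top.1 (Bornology.IsBounded.all _))]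
    exact edist_le_ediam_of_mem trivial trivial
  obtain ⟨C, hH⟩ : ∃ C, HolderWith C α.toNNReal f :=
    ⟨_, (holderWith_one.2 hf).of_le hD (by simpa using hα1)⟩
  refine ⟨C, C.coe_nonneg, fun x y => ?_⟩
  simpa [Real.coe_toNNReal _ hα0, Real.dist_eq] using hH.dist_le x y

lemma ae_eq_zero_of_forall_integral_mul_lipschitz_eq_zero {X : Type*} [PseudoMetricSpace X]
    [MeasurableSpace X] [BorelSpace X] {μ : Measure X} {g : X → ℝ} (hg : Integrable g μ)
    (h : ∀ ψ : X → ℝ, (∃ K, LipschitzWith K ψ) → (∀ x, ‖ψ x‖ ≤ 1) → ∫ x, g x * ψ x ∂μ = 0) :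
    g =ᵐ[μ] 0 := by
  refine ae_eq_zero_of_forall_setIntegral_isClosed_eq_zero hg fun F hF => ?_
  have hδ : ∀ n : ℕ, 0 < 1 / ((n : ℝ) + 1) := fun n => by positivity
  set ψ : ℕ → X → ℝ := fun n x => thickenedIndicator (hδ n) F x
  have hψ1 : ∀ n x, ‖ψ n x‖ ≤ 1 := fun n x => by
    simpa [ψ] using thickenedIndicator_le_one (hδ n) F x
  have hlim : ∀ x, Tendsto (fun n => g x * ψ n x) atTop (𝓝 (F.indicator g x)) := fun x => by
    have := tendsto_pi_nhds.1 (thickenedIndicator_tendsto_indicator_closure hδ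
      tendsto_one_div_add_atTop_nhds_zero_nat F) x
    have := (NNReal.continuous_coe.tendsto _).comp this
    rw [hF.closure_eq] at this
    by_cases hx : x ∈ F <;> simpa [hx, ψ] using this.const_mul (g x)
  have hint : Tendsto (fun n => ∫ x, g x * ψ n x ∂μ) atTop (𝓝 (∫ x in F, g x ∂μ)) := by
    rw [← integral_indicator hF.measurableSet]
    refine tendsto_integral_of_dominated_convergence (fun x => ‖g x‖)
      (fun n => hg.aestronglyMeasurable.mul ?_) hg.norm
      (fun n => Eventually.of_forall fun x => ?_) (Eventually.of_forall hlim)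
    · exact (thickenedIndicator (hδ n) F).continuous.measurable.coe_nnreal_real
        |>.aestronglyMeasurable
    · simpa [norm_mul] using mul_le_of_le_one_right (norm_nonneg (g x)) (hψ1 n x)
  have hzero : ∀ n, ∫ x, g x * ψ n x ∂μ = 0 := fun n =>
    h _ ⟨_, (LipschitzWith.subtype_val _).comp (lipschitzWith_thickenedIndicator (hδ n) F)⟩ (hψ1 n)
  simp only [hzero] at hint
  exact tendsto_nhds_unique hint tendsto_const_nhds

/-- **exactness from decay of correlations.** Let `T` be a measurable map
of a compact metric space preserving a Borel probability measure `μ`. If `μ` has exponential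
decay of correlations for Hölder observables, with constant linear in the `L¹`-norm of the
first factor, then `μ` is exact: every `φ ∈ L¹(μ)` measurable with respect to the tail
`σ`-algebra `B_∞ = ⋂_{n ≥ 0} T^{−n}(B)` is constant `μ`-almost everywhere. -/
theorem exactness_from_exponential_decay
    {X : Type*} [MetricSpace X] [CompactSpace X] [MeasurableSpace X] [BorelSpace X]
    (T : X → X) (hT : Measurable T)
    (μ : Measure X) (hμprob : IsProbabilityMeasure μ)
    (hinv : ∀ A : Set X, MeasurableSet A → μ (T ⁻¹' A) = μ A)
    (α : ℝ) (hα : 0 < α) (hα1 : α ≤ 1)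
    (τ : ℝ) (hτ0 : 0 < τ) (hτ1 : τ < 1)
    (hdec : ∀ ψ : X → ℝ,
      (∃ C : ℝ, 0 ≤ C ∧ ∀ x y : X, |ψ x - ψ y| ≤ C * dist x y ^ α) →
      ∃ K : ℝ, 0 < K ∧ ∀ φ : X → ℝ, Integrable φ μ → ∀ n : ℕ, 1 ≤ n →
        |(∫ x, φ (T^[n] x) * ψ x ∂μ) - (∫ x, φ x ∂μ) * ∫ x, ψ x ∂μ| ≤
          K * (∫ x, |φ x| ∂μ) * τ ^ n) :
    ∀ φ : X → ℝ, Integrable φ μ →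
      Measurable[⨅ n : ℕ, MeasurableSpace.comap (T^[n]) (inferInstance : MeasurableSpace X)] φ →
      ∃ c : ℝ, ∀ᵐ x ∂μ, φ x = c := by
  intro φ hφ htail
  have hmp : MeasurePreserving T μ μ :=
    ⟨hT, Measure.ext fun s hs => by rw [Measure.map_apply hT hs, hinv s hs]⟩
  refine ⟨∫ x, φ x ∂μ, ?_⟩
  suffices h : (fun x => φ x - ∫ x, φ x ∂μ) =ᵐ[μ] 0 by
    filter_upwards [h] with x hx using sub_eq_zero.1 hx
  refine ae_eq_zero_of_forall_integral_mul_lipschitz_eq_zero (hφ.sub (integrable_const _))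
    fun ψ ⟨K, hψ⟩ hψ1 => ?_
  obtain ⟨Kψ, -, hdecψ⟩ := hdec ψ (hψ.exists_abs_sub_le_mul_dist_rpow hα.le hα1)
  have hcorr := integral_mul_eq_mul_integral_of_measurable_tail hmp hφ htail hτ0.le hτ1 hdecψ
  have hψm := hψ.continuous.aestronglyMeasurable (μ := μ)
  have hψi : Integrable ψ μ := .of_bound hψm 1 (.of_forall hψ1)
  have hφψ : Integrable (fun x => φ x * ψ x) μ := hφ.mul_bdd hψm (.of_forall hψ1)
  simp_rw [sub_mul]
  rw [integral_sub hφψ (hψi.const_mul _), integral_const_mul, hcorr, sub_self]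
end
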